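/- arXiv:1702.07602 — 9 statements merged into one kernel-verified Lean document; each statement's English description precedes it below -/
import Mathlib

section
/- For every integer p ≥ 2, the radius of convergence of the power series Σ_{n≥0} C_n^{(p)} z^n (with complex variable z) is exactly R_p = (p−1)^{p−1}/p^p. -/
/-!
Ratio test. Writing `p = q + 1`, the ratio of consecutive Fuss–Catalan numbers is
`C_{n+1} / C_n = p · ∏_{k=1}^{q} (pn + k) / (qn + k) · (qn + 1) / (qn + p)`,
whose limit is `p · (p / q)^q = p^p / q^q = 1 / R_p`.
-/

/-- The Fuss–Catalan numbers of order `p`: `C_n^{(p)} = binom(pn, n) / ((p-1)n + 1)`. -/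
noncomputable def fussCatalan (p n : ℕ) : ℂ :=
  ((p * n).choose n : ℂ) / (((p - 1) * n + 1 : ℕ) : ℂ)

/-- `R_p = (p-1)^(p-1) / p^p`. -/
noncomputable def Rp (p : ℕ) : ℝ :=
  ((p - 1 : ℕ) : ℝ) ^ (p - 1) / (p : ℝ) ^ p

open Filter Finset Nat
open scoped Topology NNReal

theorem Nat.choose_succ_mul_succ_mul_ascFactorial (q n : ℕ) :
    ((q + 1) * (n + 1)).choose (n + 1) * (q * n + 1).ascFactorial q =
      (q + 1) * ((q + 1) * n).choose n * ((q + 1) * n + 1).ascFactorial q := by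
  have hA := add_choose_mul_factorial_mul_factorial (q * n + q) (n + 1)
  have hB := add_choose_mul_factorial_mul_factorial (q * n) n
  rw [show q * n + q + (n + 1) = (q + 1) * (n + 1) by ring] at hA
  rw [show q * n + n = (q + 1) * n by ring] at hB
  apply Nat.eq_of_mul_eq_mul_right (Nat.mul_pos (q * n).factorial_pos (n + 1).factorial_pos)
  calc ((q + 1) * (n + 1)).choose (n + 1) * (q * n + 1).ascFactorial q * ((q * n)! * (n + 1)!)
      = ((q + 1) * (n + 1)).choose (n + 1) * ((q * n)! * (q * n + 1).ascFactorial q) *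
          (n + 1)! := by ring
    _ = ((q + 1) * n + q + 1)! := by
      rw [factorial_mul_ascFactorial, hA]; ring_nf
    _ = ((q + 1) * n + q + 1) * (((q + 1) * n)! * ((q + 1) * n + 1).ascFactorial q) := by
      rw [factorial_mul_ascFactorial, factorial_succ]
    _ = (q + 1) * ((q + 1) * n).choose n * ((q + 1) * n + 1).ascFactorial q *
          ((q * n)! * (n + 1)!) := by
      rw [← hB, factorial_succ]; ring

lemma norm_fussCatalan_succ_div_norm (q n : ℕ) :
    ‖fussCatalan (q + 1) (n + 1)‖ / ‖fussCatalan (q + 1) n‖ =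
      (q + 1) * (∏ k ∈ range q, ((k + 1 + (q + 1) * n : ℝ) / (k + 1 + q * n))) *
        ((1 + q * n) / (q + 1 + q * n)) := by
  have key : (((q + 1) * (n + 1)).choose (n + 1) : ℝ) * ∏ k ∈ range q, (k + 1 + q * n : ℝ) =
      (q + 1) * ((q + 1) * n).choose n * ∏ k ∈ range q, (k + 1 + (q + 1) * n : ℝ) := by
    have := congrArg (Nat.cast : ℕ → ℝ) (choose_succ_mul_succ_mul_ascFactorial q n)
    simp only [ascFactorial_eq_prod_range] at this
    push_cast at this
    convert this using 2 <;> exact prod_congr rfl fun k _ => by ring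
  have hB : (((q + 1) * n).choose n : ℝ) ≠ 0 := by
    exact_mod_cast (Nat.choose_pos (by nlinarith)).ne'
  have hP : ∏ k ∈ range q, (k + 1 + q * n : ℝ) ≠ 0 := prod_ne_zero_iff.mpr fun k _ => by positivity
  simp only [fussCatalan, norm_div, RCLike.norm_natCast, Nat.add_sub_cancel, prod_div_distrib]
  push_cast
  generalize ∏ k ∈ range q, (k + 1 + q * n : ℝ) = P at key hP ⊢
  generalize ∏ k ∈ range q, (k + 1 + (q + 1) * n : ℝ) = Q at key ⊢
  field_simp
  linear_combination (q * n + 1 : ℝ) * (q + 1 + q * n) * key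

lemma tendsto_norm_fussCatalan_succ_div_norm {q : ℕ} (hq : q ≠ 0) :
    Tendsto (fun n => ‖fussCatalan (q + 1) (n + 1)‖ / ‖fussCatalan (q + 1) n‖) atTop
      (𝓝 ((q + 1) ^ (q + 1) / q ^ q)) := by
  have hq' : (q : ℝ) ≠ 0 := by exact_mod_cast hq
  have h := ((tendsto_const_nhds (x := (q + 1 : ℝ))).mul
    (tendsto_finsetProd (range q) fun k _ =>
      tendsto_add_mul_div_add_mul_atTop_nhds (k + 1 : ℝ) (k + 1) (q + 1) hq')).mul
    (tendsto_add_mul_div_add_mul_atTop_nhds (1 : ℝ) (q + 1) q hq')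
  simp_rw [norm_fussCatalan_succ_div_norm]
  convert h using 2
  rw [prod_const, card_range, div_self hq', mul_one, div_pow, _root_.pow_succ', mul_div_assoc]

/-- For every integer `p ≥ 2`, the radius of convergence of the power series
`Σ_{n ≥ 0} C_n^{(p)} z^n` is exactly `R_p = (p-1)^(p-1)/p^p`. -/
theorem fussCatalan_radius (p : ℕ) (hp : 2 ≤ p) :
    (FormalMultilinearSeries.ofScalars ℂ (fun n => fussCatalan p n)).radius
      = ENNReal.ofReal (Rp p) := by
  obtain ⟨q, rfl⟩ : ∃ q, p = q + 1 := ⟨p - 1, by omega⟩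
  have hq : q ≠ 0 := by omega
  set r : ℝ≥0 := (q + 1) ^ (q + 1) / q ^ q
  have hr0 : r ≠ 0 := by positivity
  have hc : Tendsto (fun n => ‖fussCatalan (q + 1) (n + 1)‖ / ‖fussCatalan (q + 1) n‖) atTop
      (𝓝 (r : ℝ)) := by
    simpa [r] using tendsto_norm_fussCatalan_succ_div_norm hq
  rw [FormalMultilinearSeries.ofScalars_radius_eq_inv_of_tendsto ℂ _ hr0 hc, Rp,
    ← ENNReal.ofReal_coe_nnreal]
  simp [r]
end

section
/- For every integer p ≥ 2 and every complex z with |z| < R_p, the sum T_p(z) := Σ_{n≥0} C_n^{(p)} z^n satisfies the algebraic equation z·T_p(z)^p − T_p(z) + 1 = 0. -/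
/-- `B p n x` is the coefficient of `z^n` in `T^x`, defined by the recurrence coming from
`T = 1 + z T^p` (so `T^(x+1) = T^x + z T^(x+p)`). -/
noncomputable def B (p : ℕ) : ℕ → ℕ → ℂ
  | 0, _ => 1
  | _ + 1, 0 => 0
  | n + 1, x + 1 => B p (n + 1) x + B p n (x + p)
  termination_by n x => (n, x)

lemma B_zero (p x : ℕ) : B p 0 x = 1 := by simp [B]
lemma B_succ_zero (p n : ℕ) : B p (n+1) 0 = 0 := by simp [B]
lemma B_succ_succ (p n x : ℕ) : B p (n+1) (x+1) = B p (n+1) x + B p n (x+p) := by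
  rw [B]

lemma key_identity (p x n : ℕ) (hp : 1 ≤ p) :
    (((x+1 : ℕ)):ℂ)/(((x+1+p*(n+1) : ℕ)):ℂ) * (((x+1+p*(n+1)).choose (n+1) : ℕ) : ℂ)
      = ((x:ℕ):ℂ)/(((x+p*(n+1) : ℕ)):ℂ) * (((x+p*(n+1)).choose (n+1) : ℕ) : ℂ)
        + (((x+p : ℕ)):ℂ)/(((x+p+p*n : ℕ)):ℂ) * (((x+p+p*n).choose n : ℕ) : ℂ) := by
  have hM : x + p + p*n = x + p*(n+1) := by ring
  set M := x + p*(n+1) with hMdef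
  have hM1 : x + 1 + p*(n+1) = M + 1 := by omega
  have hnM : n ≤ M := by
    have : n + 1 ≤ p * (n+1) := Nat.le_mul_of_pos_left (n+1) hp
    omega
  have pascal : (((M+1).choose (n+1) : ℕ) : ℂ) = (M.choose n : ℂ) + (M.choose (n+1) : ℂ) := by
    rw [Nat.choose_succ_succ]; push_cast; ring
  have key : (M.choose (n+1) : ℂ) * (n+1) = (M.choose n : ℂ) * ((M:ℂ) - n) := by
    have h := Nat.choose_succ_right_eq M n
    calc (M.choose (n+1) : ℂ) * (n+1) = ((M.choose (n+1) * (n+1) : ℕ) : ℂ) := by push_cast; ring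
      _ = ((M.choose n * (M - n) : ℕ) : ℂ) := by rw [h]
      _ = (M.choose n : ℂ) * ((M:ℂ) - n) := by push_cast [hnM]; ring
  have hMpos : 0 < M := by omega
  have hM0 : ((M:ℕ):ℂ) ≠ 0 := Nat.cast_ne_zero.mpr hMpos.ne'
  have hM10 : (((M+1:ℕ)):ℂ) ≠ 0 := Nat.cast_ne_zero.mpr (by omega)
  have hMc : ((M:ℕ):ℂ) = (x:ℂ) + (p:ℂ)*((n:ℂ)+1) := by rw [hMdef]; push_cast; ring
  have main : ((x:ℂ)+1) * M * ((M+1).choose (n+1) : ℂ)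
      = (x:ℂ) * ((M:ℂ)+1) * (M.choose (n+1) : ℂ) + ((x:ℂ)+(p:ℂ)) * ((M:ℂ)+1) * (M.choose n : ℂ) := by
    linear_combination (((x:ℂ)+1)*(M:ℂ)) * pascal + (p:ℂ) * key + ((M.choose n : ℂ) + (M.choose (n+1) : ℂ)) * hMc
  rw [hM, hM1]
  push_cast at hM0 hM10 ⊢
  field_simp
  linear_combination main

lemma B_closed (p : ℕ) (hp : 1 ≤ p) : ∀ n x, B p n (x+1)
    = (((x+1:ℕ)):ℂ)/(((x+1+p*n : ℕ)):ℂ) * (((x+1+p*n).choose n : ℕ) : ℂ) := by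
  intro n
  induction n using Nat.strong_induction_on with
  | _ n ihn =>
  cases n with
  | zero =>
    intro x
    have hx : (((x+1:ℕ)):ℂ) ≠ 0 := Nat.cast_ne_zero.mpr (by omega)
    rw [B_zero, Nat.mul_zero, Nat.add_zero, Nat.choose_zero_right, Nat.cast_one, mul_one,
      div_self hx]
  | succ m =>
    intro x
    induction x with
    | zero =>
      have h0 : B p (m+1) (0+1) = B p (m+1) 0 + B p m (0 + p) := B_succ_succ p m 0
      obtain ⟨q, rfl⟩ : ∃ q, p = q + 1 := ⟨p - 1, by omega⟩
      rw [h0, B_succ_zero, zero_add, zero_add, ihn m (by omega) q]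
      have hk := key_identity (q+1) 0 m hp
      simp only [Nat.cast_zero, zero_div, zero_mul, zero_add] at hk
      rw [← hk]
    | succ x ihx =>
      have h0 : B p (m+1) (x+1+1) = B p (m+1) (x+1) + B p m ((x+p) + 1) := by
        rw [B_succ_succ]; ring_nf
      rw [h0, ihx, ihn m (by omega) (x+p)]
      have hk := key_identity p (x+1) m hp
      rw [show x+1+p = x+p+1 by omega] at hk
      rw [← hk]

lemma B_conv (p y : ℕ) : ∀ n x, B p n (x+y) = ∑ k ∈ Finset.range (n+1), B p k x * B p (n-k) y := by
  intro n
  induction n using Nat.strong_induction_on with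
  | _ n ihn =>
  intro x
  induction x with
  | zero =>
    rw [zero_add, Finset.sum_eq_single 0]
    · simp [B_zero]
    · intro b hb hb0
      obtain ⟨c, rfl⟩ : ∃ c, b = c+1 := ⟨b-1, by omega⟩
      simp [B_succ_zero]
    · intro h; simp at h
  | succ x ihx =>
    cases n with
    | zero => simp [B_zero]
    | succ m =>
      have h0 : B p (m+1) (x+1+y) = B p (m+1) (x+y) + B p m ((x+p)+y) := by
        rw [show x+1+y = (x+y)+1 by omega, B_succ_succ, show x+y+p = x+p+y by omega]
      rw [h0, ihx, ihn m (by omega) (x+p),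
        Finset.sum_range_succ' (fun k => B p k (x+1) * B p (m+1-k) y) (m+1),
        Finset.sum_range_succ' (fun k => B p k x * B p (m+1-k) y) (m+1)]
      simp only [Nat.succ_sub_succ_eq_sub, Nat.sub_zero, B_succ_succ, add_mul,
        Finset.sum_add_distrib, B_zero, one_mul]
      ring

lemma choose_mul_pow_le (q m n : ℕ) : m.choose n * q^(m-n) ≤ (q+1)^m := by
  rcases le_or_gt m n with h | h
  · rcases eq_or_lt_of_le h with rfl | h'
    · simpa [Nat.sub_self] using Nat.one_le_pow m (q+1) (by omega)
    · simp [Nat.choose_eq_zero_of_lt h']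
  · have hmem : m - n ∈ Finset.range (m+1) := by simp
    have e1 : m.choose n * q^(m-n) = q^(m-n) * 1^(m-(m-n)) * m.choose (m-n) := by
      rw [Nat.choose_symm h.le, one_pow]; ring
    rw [e1, add_pow q 1 m]
    simp only [Nat.cast_id]
    exact Finset.single_le_sum (f := fun k => q^k * 1^(m-k) * m.choose k) (fun k _ => Nat.zero_le _) hmem

lemma norm_B_le (p : ℕ) (hp : 1 ≤ p) (n x : ℕ) : ‖B p n x‖ ≤ ((x + p*n).choose n : ℝ) := by
  cases x with
  | zero =>
    cases n with
    | zero => simp [B_zero]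
    | succ m =>
      rw [B_succ_zero]
      simp
  | succ x =>
    rw [B_closed p hp n x]
    rw [norm_mul, norm_div]
    simp only [Complex.norm_natCast]
    have h1 : (0:ℝ) < ((x+1+p*n : ℕ):ℝ) := by positivity
    calc ((x+1:ℕ):ℝ) / ((x+1+p*n : ℕ):ℝ) * ((x+1+p*n).choose n : ℝ)
        ≤ 1 * ((x+1+p*n).choose n : ℝ) := by
          apply mul_le_mul_of_nonneg_right _ (by positivity)
          rw [div_le_one h1]
          exact_mod_cast Nat.le_add_right _ _
      _ = ((x+1+p*n).choose n : ℝ) := one_mul _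

lemma summable_norm_B (p : ℕ) (hp : 2 ≤ p) (z : ℂ) (hz : ‖z‖ < Rp p) (x : ℕ) :
    Summable (fun n => ‖B p n x * z^n‖) := by
  unfold Rp at hz
  set q := p - 1 with hqdef
  have h : p = q + 1 := by omega
  have hq1 : 1 ≤ q := by omega
  set r : ℝ := ‖z‖ * (p:ℝ)^p / (q:ℝ)^q with hr
  have hr0 : 0 ≤ r := by positivity
  have hr1 : r < 1 := by
    rw [hr, div_lt_one (by positivity)]
    exact (lt_div_iff₀ (by positivity)).mp hz
  refine Summable.of_nonneg_of_le (fun n => norm_nonneg _) (fun n => ?_)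
    (Summable.mul_left ((p:ℝ)^x/(q:ℝ)^x) (summable_geometric_of_lt_one hr0 hr1))
  rw [norm_mul, norm_pow]
  have h1 : ‖B p n x‖ ≤ ((x + p*n).choose n : ℝ) := norm_B_le p (by omega) n x
  have hsub : x + p*n - n = x + q*n := by
    have hpn : p*n = q*n + n := by rw [h]; ring
    omega
  have h2 : (((x+p*n).choose n : ℕ):ℝ) * (q:ℝ)^(x + q*n) ≤ (p:ℝ)^(x+p*n) := by
    have h3 := choose_mul_pow_le q (x+p*n) n
    rw [hsub, ← h] at h3
    exact_mod_cast h3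
  have h3 : ((x+p*n).choose n : ℝ) ≤ (p:ℝ)^(x+p*n) / (q:ℝ)^(x+q*n) := by
    rw [le_div_iff₀ (by positivity)]; exact h2
  have hq0 : ((q:ℝ)) ≠ 0 := by positivity
  calc ‖B p n x‖ * ‖z‖^n
      ≤ ((x+p*n).choose n : ℝ) * ‖z‖^n := by
        apply mul_le_mul_of_nonneg_right h1 (by positivity)
    _ ≤ ((p:ℝ)^(x+p*n) / (q:ℝ)^(x+q*n)) * ‖z‖^n := by
        apply mul_le_mul_of_nonneg_right h3 (by positivity)
    _ = (p:ℝ)^x/(q:ℝ)^x * r^n := by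
        rw [hr, pow_add, pow_add, pow_mul, pow_mul, div_pow, mul_pow]
        field_simp

lemma tsum_B_pow (p : ℕ) (hp : 2 ≤ p) (z : ℂ) (hz : ‖z‖ < Rp p) :
    ∀ x, (∑' n, B p n 1 * z^n)^x = ∑' n, B p n x * z^n := by
  intro x
  induction x with
  | zero =>
    rw [pow_zero, tsum_eq_single 0 ?_]
    · simp [B_zero]
    · intro b hb
      obtain ⟨c, rfl⟩ : ∃ c, b = c+1 := ⟨b-1, by omega⟩
      simp [B_succ_zero]
  | succ x ih =>
    rw [pow_succ, ih,
      tsum_mul_tsum_eq_tsum_sum_range_of_summable_norm (summable_norm_B p hp z hz x)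
        (summable_norm_B p hp z hz 1)]
    apply tsum_congr
    intro n
    rw [B_conv p 1 n x, Finset.sum_mul]
    apply Finset.sum_congr rfl
    intro k hk
    have hkn : k ≤ n := by
      have := Finset.mem_range.mp hk; omega
    have hz2 : z^k * z^(n-k) = z^n := by rw [← pow_add, Nat.add_sub_cancel' hkn]
    calc (B p k x * z^k) * (B p (n-k) 1 * z^(n-k))
        = B p k x * B p (n-k) 1 * (z^k * z^(n-k)) := by ring
      _ = B p k x * B p (n-k) 1 * z^n := by rw [hz2]

lemma choose_id (p n : ℕ) (hp : 2 ≤ p) :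
    (1 + p*n).choose n * ((p-1)*n+1) = (p*n).choose n * (1 + p*n) := by
  cases n with
  | zero => simp
  | succ k =>
    set q := p - 1 with hqdef
    have h : p = q + 1 := by omega
    set M := p * (k+1) with hM
    have hMk : M - k = q*(k+1)+1 := by
      have e : p * (k+1) = q*(k+1) + (k+1) := by rw [h]; ring
      omega
    have goal2 : (M+1).choose (k+1) * (M - k) = M.choose (k+1) * (M+1) := by
      have t1 : (M+1).choose (k+1) * (k+1) = (M+1) * M.choose k :=
        (Nat.add_one_mul_choose_eq M k).symm
      have t2 : M.choose (k+1) * (k+1) = M.choose k * (M-k) := Nat.choose_succ_right_eq M k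
      have key : ((M+1).choose (k+1) * (M - k)) * (k+1) = (M.choose (k+1) * (M+1)) * (k+1) := by
        calc ((M+1).choose (k+1) * (M - k)) * (k+1)
            = ((M+1).choose (k+1) * (k+1)) * (M-k) := by ring
          _ = ((M+1) * M.choose k) * (M-k) := by rw [t1]
          _ = (M+1) * (M.choose k * (M-k)) := by ring
          _ = (M+1) * (M.choose (k+1) * (k+1)) := by rw [← t2]
          _ = (M.choose (k+1) * (M+1)) * (k+1) := by ring
      exact Nat.eq_of_mul_eq_mul_right (by omega) key
    calc (1 + M).choose (k+1) * (q*(k+1)+1)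
        = (M+1).choose (k+1) * (M - k) := by rw [hMk, Nat.add_comm 1 M]
      _ = M.choose (k+1) * (M+1) := goal2
      _ = M.choose (k+1) * (1 + M) := by ring

lemma fussCatalan_eq_B (p : ℕ) (hp : 2 ≤ p) (n : ℕ) : fussCatalan p n = B p n 1 := by
  have h1 : B p n (0+1) = (((0+1:ℕ)):ℂ)/(((0+1+p*n : ℕ)):ℂ) * (((0+1+p*n).choose n : ℕ) : ℂ) :=
    B_closed p (by omega) n 0
  simp only [Nat.zero_add, zero_add] at h1
  rw [show (1:ℕ) = 0 + 1 from rfl] at h1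
  simp only [zero_add] at h1
  rw [fussCatalan, h1]
  have d1 : ((((p-1)*n+1 : ℕ)):ℂ) ≠ 0 := Nat.cast_ne_zero.mpr (by omega)
  have d2 : (((1+p*n : ℕ)):ℂ) ≠ 0 := Nat.cast_ne_zero.mpr (by omega)
  rw [Nat.cast_one, one_div, inv_mul_eq_div, div_eq_div_iff d1 d2]
  exact_mod_cast (choose_id p n hp).symm

/-- For every integer `p ≥ 2` and every complex `z` with `|z| < R_p`, the sum
`T_p(z) = Σ_{n ≥ 0} C_n^{(p)} z^n` satisfies `z T_p(z)^p − T_p(z) + 1 = 0`. -/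
theorem fussCatalan_sum_algebraic_equation (p : ℕ) (hp : 2 ≤ p) (z : ℂ)
    (hz : ‖z‖ < Rp p) :
    z * (∑' n : ℕ, fussCatalan p n * z ^ n) ^ p
      - (∑' n : ℕ, fussCatalan p n * z ^ n) + 1 = 0 := by
  have hT : (∑' n : ℕ, fussCatalan p n * z^n) = ∑' n : ℕ, B p n 1 * z^n :=
    tsum_congr fun n => by rw [fussCatalan_eq_B p hp n]
  rw [hT, tsum_B_pow p hp z hz p]
  have hsum1 : Summable (fun n => B p n 1 * z^n) := (summable_norm_B p hp z hz 1).of_norm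
  have e1 : z * ∑' n, B p n p * z^n = ∑' n : ℕ, B p (n+1) 1 * z^(n+1) := by
    rw [← tsum_mul_left]
    apply tsum_congr; intro n
    have hB1 : B p (n+1) 1 = B p n p := by
      have h := B_succ_succ p n 0
      simpa [B_succ_zero] using h
    rw [hB1]; ring
  have e2 : (∑' n : ℕ, B p n 1 * z^n) = 1 + ∑' n : ℕ, B p (n+1) 1 * z^(n+1) := by
    rw [Summable.tsum_eq_zero_add hsum1]
    simp [B_zero]
  rw [e1, e2]; ring
end

section
/- For every integer p ≥ 2 and every complex z with |z| < R_p, the series F_p(z) := Σ_{n≥0} binom(pn, n) z^n converges, p − (p−1)·T_p(z) ≠ 0, 1 − p·z·T_p(z)^{p−1} ≠ 0, and F_p(z) = (p−1)·z·T_p'(z) + T_p(z) = T_p(z)/(p − (p−1)·T_p(z)) = 1/(1 − p·z·T_p(z)^{p−1}). -/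
/-- `T_p(z) = Σ_{n ≥ 0} C_n^{(p)} z^n`. -/
noncomputable def Tp (p : ℕ) (z : ℂ) : ℂ :=
  ∑' n : ℕ, fussCatalan p n * z ^ n

open Finset Topology

/-- `raney p r n = r/(pn+r) * binom(pn+r, n)` (see `mul_raney_eq_mul_choose`), defined through
the recursion that `T^(r+1) = T^r + z T^(r+p)` imposes on the coefficients of the powers of
`T = T_p`. -/
def raney (p : ℕ) : ℕ → ℕ → ℕ
  | _, 0 => 1
  | 0, _ + 1 => 0
  | r + 1, n + 1 => raney p r (n + 1) + raney p (r + p) n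
termination_by r n => (n, r)

section Raney

variable (p : ℕ)

@[simp]
theorem raney_zero_right (r : ℕ) : raney p r 0 = 1 := by
  cases r <;> rw [raney]

@[simp]
theorem raney_zero_succ (n : ℕ) : raney p 0 (n + 1) = 0 := by
  rw [raney]

theorem raney_succ_succ (r n : ℕ) :
    raney p (r + 1) (n + 1) = raney p r (n + 1) + raney p (r + p) n := by
  rw [raney]

theorem raney_one_succ (n : ℕ) : raney p 1 (n + 1) = raney p p n := by
  rw [raney_succ_succ, raney_zero_succ, zero_add, zero_add]

theorem raney_succ_eq_sum_antidiagonal (m n : ℕ) :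
    raney p (m + 1) n = ∑ kl ∈ antidiagonal n, raney p 1 kl.1 * raney p m kl.2 := by
  induction n generalizing m with
  | zero => simp
  | succ n ihn =>
    induction m with
    | zero => simp [Nat.sum_antidiagonal_succ']
    | succ m ihm =>
      rw [Nat.sum_antidiagonal_succ'] at ihm ⊢
      simp only [raney_succ_succ p m, mul_add, sum_add_distrib, raney_zero_right]
      rw [raney_succ_succ, ihm, add_right_comm m 1 p, ihn, raney_zero_right, mul_one, add_assoc]

theorem mul_raney_eq_mul_choose {p : ℕ} (hp : 0 < p) (r n : ℕ) :
    (p * n + r) * raney p r n = r * (p * n + r).choose n := by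
  induction n generalizing r with
  | zero => simp
  | succ n ihn =>
    induction r with
    | zero => simp
    | succ r ihr =>
      set N := p * (n + 1) + r with hNdef
      have hN : 0 < N := by positivity
      have hnN : n ≤ N :=
        (n.le_succ.trans (Nat.le_mul_of_pos_left _ hp)).trans (Nat.le_add_right _ r)
      have h₁ : N * raney p r (n + 1) = r * N.choose (n + 1) := ihr
      have h₂ : N * raney p (r + p) n = (r + p) * N.choose n := by
        have := ihn (r + p); rwa [show p * n + (r + p) = N by ring] at this
      have h₃ := N.add_one_mul_choose_eq n
      have h₄ := N.choose_succ_right_eq n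
      rw [raney_succ_succ, show p * (n + 1) + (r + 1) = N + 1 by ring]
      apply Nat.eq_of_mul_eq_mul_left (Nat.mul_pos hN n.succ_pos)
      zify [hnN] at h₁ h₂ h₃ h₄ hNdef ⊢
      linear_combination (↑n + 1) * (↑N + 1) * (h₁ + h₂) + (↑N + 1) * ↑r * h₄
        + ↑N * (↑r + 1) * h₃ - (↑N + 1) * (N.choose n : ℤ) * hNdef

end Raney

theorem fussCatalan_eq_raney {p : ℕ} (hp : 0 < p) (n : ℕ) : fussCatalan p n = raney p 1 n := by
  have hsub : p * n + 1 - n = (p - 1) * n + 1 := by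
    rw [Nat.sub_one_mul]; have := Nat.le_mul_of_pos_left n hp; omega
  have h : ((p - 1) * n + 1) * raney p 1 n = (p * n).choose n := by
    apply Nat.eq_of_mul_eq_mul_left (p * n).succ_pos
    calc (p * n + 1) * (((p - 1) * n + 1) * raney p 1 n)
        = ((p - 1) * n + 1) * ((p * n + 1) * raney p 1 n) := by ring
      _ = (p * n + 1) * (p * n).choose n := by
        rw [mul_raney_eq_mul_choose hp, one_mul, ← hsub, mul_comm, ← Nat.choose_mul_succ_eq]
        ring
  rw [fussCatalan, ← h, Nat.cast_mul,
    mul_div_cancel_left₀ _ (Nat.cast_ne_zero.mpr (Nat.succ_ne_zero _))]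

theorem Nat.choose_mul_pow_le_succ_pow (n k a : ℕ) :
    n.choose k * a ^ (n - k) ≤ (a + 1) ^ n := by
  rcases le_or_gt k n with hk | hk
  · calc n.choose k * a ^ (n - k) = 1 ^ k * a ^ (n - k) * n.choose k := by ring
      _ ≤ ∑ i ∈ range (n + 1), 1 ^ i * a ^ (n - i) * n.choose i :=
        single_le_sum (f := fun i => 1 ^ i * a ^ (n - i) * n.choose i)
          (fun _ _ => Nat.zero_le _) (mem_range_succ_iff.mpr hk)
      _ = (a + 1) ^ n := by rw [add_comm a 1, add_pow]; simp only [Nat.cast_id]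
  · simp [Nat.choose_eq_zero_of_lt hk]

theorem Rp_pos {p : ℕ} (hp : 0 < p) : 0 < Rp p := by
  rcases Nat.lt_or_ge 1 p with h | h
  · have : 0 < p - 1 := by omega
    unfold Rp; positivity
  · obtain rfl : p = 1 := by omega
    norm_num [Rp]

theorem choose_mul_Rp_pow_le_one {p : ℕ} (hp : 0 < p) (n : ℕ) :
    ((p * n).choose n : ℝ) * Rp p ^ n ≤ 1 := by
  have h := Nat.choose_mul_pow_le_succ_pow (p * n) n (p - 1)
  rw [← Nat.sub_one_mul, Nat.sub_add_cancel hp] at h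
  rw [Rp, div_pow, ← pow_mul, ← pow_mul, mul_div_assoc', div_le_one (by positivity)]
  exact_mod_cast h

theorem summable_pow_mul_choose_mul_pow {p : ℕ} (hp : 0 < p) (k : ℕ) {r : ℝ} (hr₀ : 0 ≤ r)
    (hr : r < Rp p) : Summable fun n : ℕ => (n : ℝ) ^ k * ((p * n).choose n * r ^ n) := by
  have hR := Rp_pos hp
  have hx : ‖r / Rp p‖ < 1 := by
    rwa [Real.norm_of_nonneg (by positivity), div_lt_one hR]
  refine (summable_pow_mul_geometric_of_norm_lt_one k hx).of_nonneg_of_le (fun n => by positivity)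
    fun n => ?_
  gcongr
  calc ((p * n).choose n : ℝ) * r ^ n = (p * n).choose n * Rp p ^ n * (r / Rp p) ^ n := by
        rw [div_pow, mul_assoc, mul_div_cancel₀ _ (by positivity)]
    _ ≤ (r / Rp p) ^ n := mul_le_of_le_one_left (by positivity) (choose_mul_Rp_pow_le_one hp n)

theorem summable_norm_choose_mul_pow {p : ℕ} (hp : 0 < p) {z : ℂ} (hz : ‖z‖ < Rp p) :
    Summable fun n : ℕ => ‖((p * n).choose n : ℂ) * z ^ n‖ :=
  (summable_pow_mul_choose_mul_pow hp 0 (norm_nonneg z) hz).congr fun n => by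
    rw [pow_zero, one_mul, norm_mul, norm_pow, Complex.norm_natCast]

theorem norm_fussCatalan_le (p n : ℕ) : ‖fussCatalan p n‖ ≤ (p * n).choose n := by
  rw [fussCatalan, norm_div, Complex.norm_natCast, Complex.norm_natCast]
  exact div_le_self (Nat.cast_nonneg _) (by exact_mod_cast Nat.succ_pos _)

theorem hasDerivAt_tsum_mul_pow {𝕜 : Type*} [RCLike 𝕜] {a : ℕ → 𝕜} {r : ℝ} {z : 𝕜}
    (hz : ‖z‖ < r) (ha : Summable fun n : ℕ => n * ‖a n‖ * r ^ n) :
    HasDerivAt (fun w => ∑' n, a n * w ^ n) (∑' n, a n * (n * z ^ (n - 1))) z := by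
  have hr : 0 < r := (norm_nonneg z).trans_lt hz
  refine hasDerivAt_tsum_of_isPreconnected (ha.div_const r) Metric.isOpen_ball
    (convex_ball 0 r).isPreconnected (fun n y _ => (hasDerivAt_pow n y).const_mul (a n))
    (fun n y hy => ?_) (Metric.mem_ball_self hr) ?_ (mem_ball_zero_iff.mpr hz)
  · have hpow : (n : ℝ) * r ^ (n - 1) = n * r ^ n / r := by
      rcases n with _ | n
      · simp
      · rw [Nat.add_sub_cancel, pow_succ]
        field_simp
    calc ‖a n * (n * y ^ (n - 1))‖ = ‖a n‖ * (n * ‖y‖ ^ (n - 1)) := by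
          rw [norm_mul, norm_mul, norm_pow, RCLike.norm_natCast]
      _ ≤ ‖a n‖ * (n * r ^ (n - 1)) := by
          gcongr; exact (mem_ball_zero_iff.mp hy).le
      _ = n * ‖a n‖ * r ^ n / r := by rw [hpow]; ring
  · refine summable_of_ne_finset_zero (s := {0}) fun n hn => ?_
    rw [zero_pow (by simpa using hn), mul_zero]

theorem hasDerivAt_Tp {p : ℕ} (hp : 0 < p) {z : ℂ} (hz : ‖z‖ < Rp p) :
    HasDerivAt (Tp p) (∑' n, fussCatalan p n * (n * z ^ (n - 1))) z := by
  obtain ⟨r, hzr, hr⟩ := exists_between hz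
  have hr₀ : 0 ≤ r := (norm_nonneg z).trans hzr.le
  refine hasDerivAt_tsum_mul_pow hzr
    ((summable_pow_mul_choose_mul_pow hp 1 hr₀ hr).of_nonneg_of_le (fun n => by positivity)
      fun n => ?_)
  rw [pow_one, mul_assoc]
  gcongr
  exact norm_fussCatalan_le p n

theorem raney_succ_mul_pow_eq_sum_antidiagonal {R : Type*} [CommSemiring R] (p m n : ℕ)
    (z : R) :
    (raney p (m + 1) n : R) * z ^ n
      = ∑ kl ∈ antidiagonal n, (raney p 1 kl.1 * z ^ kl.1) * (raney p m kl.2 * z ^ kl.2) := by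
  rw [raney_succ_eq_sum_antidiagonal, Nat.cast_sum, sum_mul]
  refine sum_congr rfl fun kl hkl => ?_
  rw [← mem_antidiagonal.mp hkl, pow_add]
  push_cast
  ring

section Powers

variable {p : ℕ} {z : ℂ} (h : Summable fun n => ‖(raney p 1 n : ℂ) * z ^ n‖)
include h

theorem summable_norm_raney_succ_mul_pow (m : ℕ) :
    Summable fun n => ‖(raney p (m + 1) n : ℂ) * z ^ n‖ := by
  induction m with
  | zero => exact h
  | succ m ih =>
    exact (summable_norm_sum_mul_antidiagonal_of_summable_norm h ih).congr fun n => by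
      rw [raney_succ_mul_pow_eq_sum_antidiagonal]

theorem tsum_raney_succ_mul_pow (m : ℕ) :
    ∑' n, (raney p (m + 1) n : ℂ) * z ^ n
      = (∑' n, (raney p 1 n : ℂ) * z ^ n) ^ (m + 1) := by
  induction m with
  | zero => rw [zero_add, pow_one]
  | succ m ih =>
    rw [pow_succ', ← ih, tsum_mul_tsum_eq_tsum_sum_antidiagonal_of_summable_norm h
      (summable_norm_raney_succ_mul_pow h m)]
    exact tsum_congr fun n => raney_succ_mul_pow_eq_sum_antidiagonal p (m + 1) n z

end Powers

section Tp

variable {p : ℕ} (hp : 0 < p) {z : ℂ} (hz : ‖z‖ < Rp p)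
include hp hz

theorem summable_norm_fussCatalan_mul_pow : Summable fun n => ‖fussCatalan p n * z ^ n‖ :=
  (summable_norm_choose_mul_pow hp hz).of_nonneg_of_le (fun _ => norm_nonneg _) fun n => by
    rw [norm_mul, norm_mul, Complex.norm_natCast]
    gcongr
    exact norm_fussCatalan_le p n

theorem Tp_eq_one_add_mul_pow : Tp p z = 1 + z * Tp p z ^ p := by
  have hT : Tp p z = ∑' n, (raney p 1 n : ℂ) * z ^ n :=
    tsum_congr fun n => by rw [fussCatalan_eq_raney hp]
  have h1 : Summable fun n => ‖(raney p 1 n : ℂ) * z ^ n‖ := by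
    simpa only [fussCatalan_eq_raney hp] using summable_norm_fussCatalan_mul_pow hp hz
  obtain ⟨q, rfl⟩ : ∃ q, p = q + 1 := ⟨p - 1, by omega⟩
  rw [hT, ← tsum_raney_succ_mul_pow h1, ← tsum_mul_left, h1.of_norm.tsum_eq_zero_add]
  simp only [raney_zero_right, raney_one_succ, Nat.cast_one, pow_zero, mul_one]
  congr 1
  exact tsum_congr fun n => by ring

theorem eq_Tp_pow_add_of_hasDerivAt {D : ℂ} (hD : HasDerivAt (Tp p) D z) :
    D = Tp p z ^ p + z * (p * Tp p z ^ (p - 1) * D) := by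
  have hev : Tp p =ᶠ[𝓝 z] fun w => 1 + w * Tp p w ^ p := by
    filter_upwards [Metric.isOpen_ball.mem_nhds (mem_ball_zero_iff.mpr hz)] with w hw
    exact Tp_eq_one_add_mul_pow hp (mem_ball_zero_iff.mp hw)
  have h := (((hasDerivAt_id z).mul (hD.pow p)).const_add 1).congr_of_eventuallyEq hev
  refine (hD.unique h).trans ?_
  simp only [Pi.pow_apply, id, one_mul]

theorem tsum_choose_mul_pow_eq :
    ∑' n, ((p * n).choose n : ℂ) * z ^ n
      = (p - 1 : ℂ) * z * (∑' n, fussCatalan p n * (n * z ^ (n - 1))) + Tp p z := by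
  have hcoeff (n : ℕ) : ((p * n).choose n : ℂ) * z ^ n
      = (p - 1 : ℂ) * (n * fussCatalan p n * z ^ n) + fussCatalan p n * z ^ n := by
    have hden : ((((p - 1) * n + 1 : ℕ)) : ℂ) = (p - 1 : ℂ) * n + 1 := by
      rw [Nat.cast_add_one, Nat.cast_mul, Nat.cast_pred hp]
    have hc : (p - 1 : ℂ) * n + 1 ≠ 0 := by
      rw [← hden]; exact Nat.cast_ne_zero.mpr (Nat.succ_ne_zero _)
    rw [fussCatalan, hden]
    field_simp
  have hderiv (n : ℕ) :
      z * (fussCatalan p n * (n * z ^ (n - 1))) = n * fussCatalan p n * z ^ n := by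
    rcases n with _ | n
    · simp
    · rw [Nat.add_sub_cancel, pow_succ']
      ring
  have h₁ := (summable_norm_fussCatalan_mul_pow hp hz).of_norm
  have h₂ : Summable fun n : ℕ => (n : ℂ) * fussCatalan p n * z ^ n := by
    refine .of_norm ((summable_pow_mul_choose_mul_pow hp 1 (norm_nonneg z) hz).of_nonneg_of_le
      (fun _ => norm_nonneg _) fun n => ?_)
    rw [norm_mul, norm_mul, norm_pow, Complex.norm_natCast, pow_one, mul_assoc]
    gcongr
    exact norm_fussCatalan_le p n
  rw [tsum_congr hcoeff, (h₂.mul_left _).tsum_add h₁, tsum_mul_left, ← tsum_congr hderiv,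
    tsum_mul_left, mul_assoc, Tp]

end Tp

section FunctionalEquation

variable {p : ℕ} (hp : 0 < p) {z w : ℂ} (hw : w = 1 + z * w ^ p)
include hp hw

theorem eq_Rp_of_eq_one_add_mul_pow (h : (p - 1 : ℂ) * w = p) : z = Rp p := by
  obtain ⟨q, rfl⟩ : ∃ q, p = q + 1 := ⟨p - 1, by omega⟩
  have hpow : ((q : ℂ) * w) ^ (q + 1) = ((q : ℂ) + 1) ^ (q + 1) := by
    push_cast at h; rw [add_sub_cancel_right] at h; rw [h]
  rw [Rp, Nat.add_sub_cancel]
  push_cast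
  rw [eq_div_iff (by norm_cast; positivity)]
  push_cast at h hw
  linear_combination (-z) * hpow - (q : ℂ) ^ (q + 1) * hw + (q : ℂ) ^ q * h

theorem one_sub_mul_pow_mul_eq : (1 - p * z * w ^ (p - 1)) * w = p - (p - 1 : ℂ) * w := by
  have h := pow_sub_one_mul hp.ne' w
  linear_combination (-p * z : ℂ) * h + (p : ℂ) * hw

theorem add_mul_one_sub_mul_pow_eq_one {D : ℂ} (hD : D = w ^ p + z * (p * w ^ (p - 1) * D)) :
    ((p - 1 : ℂ) * z * D + w) * (1 - p * z * w ^ (p - 1)) = 1 := by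
  linear_combination (p - 1 : ℂ) * z * hD + one_sub_mul_pow_mul_eq hp hw - (p - 1 : ℂ) * hw

end FunctionalEquation

/-- For `p ≥ 2` and `|z| < R_p`, the series `F_p(z) = Σ_{n ≥ 0} binom(pn,n) z^n`
converges, `p − (p−1) T_p(z) ≠ 0`, `1 − p z T_p(z)^{p−1} ≠ 0`, and
`F_p(z) = (p−1) z T_p'(z) + T_p(z) = T_p(z)/(p − (p−1) T_p(z)) = 1/(1 − p z T_p(z)^{p−1})`. -/
theorem fussCatalan_Fp_identities (p : ℕ) (hp : 2 ≤ p) (z : ℂ) (hz : ‖z‖ < Rp p) :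
    Summable (fun n : ℕ => ((p * n).choose n : ℂ) * z ^ n) ∧
    (p : ℂ) - ((p : ℂ) - 1) * Tp p z ≠ 0 ∧
    1 - (p : ℂ) * z * Tp p z ^ (p - 1) ≠ 0 ∧
    (∑' n : ℕ, ((p * n).choose n : ℂ) * z ^ n)
      = ((p : ℂ) - 1) * z * deriv (Tp p) z + Tp p z ∧
    (∑' n : ℕ, ((p * n).choose n : ℂ) * z ^ n)
      = Tp p z / ((p : ℂ) - ((p : ℂ) - 1) * Tp p z) ∧
    (∑' n : ℕ, ((p * n).choose n : ℂ) * z ^ n)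
      = 1 / (1 - (p : ℂ) * z * Tp p z ^ (p - 1)) := by
  have hp₀ : 0 < p := by omega
  have hT := Tp_eq_one_add_mul_pow hp₀ hz
  have hD := hasDerivAt_Tp hp₀ hz
  have hne : (p : ℂ) - ((p : ℂ) - 1) * Tp p z ≠ 0 := fun h => by
    have hzR := eq_Rp_of_eq_one_add_mul_pow hp₀ hT (by linear_combination -h)
    rw [hzR, Complex.norm_real, Real.norm_of_nonneg (Rp_pos hp₀).le] at hz
    exact lt_irrefl _ hz
  have hT₀ : Tp p z ≠ 0 := fun h => by simp [h, hp₀.ne'] at hT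
  have hmul := one_sub_mul_pow_mul_eq hp₀ hT
  have hsub : 1 - (p : ℂ) * z * Tp p z ^ (p - 1) ≠ 0 := fun h =>
    hne (by rw [← hmul, h, zero_mul])
  have hF : ∑' n, ((p * n).choose n : ℂ) * z ^ n
      = 1 / (1 - (p : ℂ) * z * Tp p z ^ (p - 1)) := by
    rw [tsum_choose_mul_pow_eq hp₀ hz]
    exact eq_one_div_of_mul_eq_one_left
      (add_mul_one_sub_mul_pow_eq_one hp₀ hT (eq_Tp_pow_add_of_hasDerivAt hp₀ hz hD))
  refine ⟨(summable_norm_choose_mul_pow hp₀ hz).of_norm, hne, hsub, ?_, ?_, hF⟩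
  · rw [tsum_choose_mul_pow_eq hp₀ hz, hD.deriv]
  · rw [hF, ← hmul, div_mul_cancel_right₀ hT₀, one_div]
end

section
/- For every z ∈ Ω_p one has 1 − p·z·T(z)^{p−1} ≠ 0; equivalently, (p−1)·T(z) ≠ p for all z in the cut plane Ω_p. Consequently F(z) := 1/(1 − p·z·T(z)^{p−1}) is analytic and nonvanishing on Ω_p. -/
/-- The cut plane `Ω_p = ℂ ∖ [R_p, ∞)`. -/
noncomputable def cutPlane (p : ℕ) : Set ℂ :=
  (Complex.ofReal '' Set.Ici (Rp p))ᶜ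

/-- Let `T` be analytic on `Ω_p` with `z T(z)^p − T(z) + 1 = 0` there.  Then
`1 − p z T(z)^{p−1} ≠ 0` on `Ω_p` — equivalently `(p−1) T(z) ≠ p` there — and consequently
`F(z) = 1/(1 − p z T(z)^{p−1})` is analytic and nonvanishing on `Ω_p`. -/
theorem fussCatalan_denominator_nonzero (p : ℕ) (hp : 2 ≤ p) (T : ℂ → ℂ)
    (hT : AnalyticOnNhd ℂ T (cutPlane p))
    (heq : ∀ z ∈ cutPlane p, z * T z ^ p - T z + 1 = 0) :
    (∀ z ∈ cutPlane p, 1 - (p : ℂ) * z * T z ^ (p - 1) ≠ 0) ∧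
    (∀ z ∈ cutPlane p, ((p : ℂ) - 1) * T z ≠ (p : ℂ)) ∧
    AnalyticOnNhd ℂ (fun z => (1 - (p : ℂ) * z * T z ^ (p - 1))⁻¹) (cutPlane p) ∧
    (∀ z ∈ cutPlane p, (1 - (p : ℂ) * z * T z ^ (p - 1))⁻¹ ≠ 0) := by
  obtain ⟨k, rfl⟩ : ∃ k, p = k + 1 := ⟨p - 1, by omega⟩
  simp only [Nat.add_sub_cancel] at *
  set q : ℂ := ((k + 1 : ℕ) : ℂ) with hqdef
  have hk : k ≠ 0 := by omega
  have hq1 : q - 1 ≠ 0 := by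
    have : q - 1 = (k : ℂ) := by push_cast [hqdef]; ring
    rw [this]
    exact Nat.cast_ne_zero.mpr hk
  have hq : q ≠ 0 := by
    rw [hqdef]
    exact Nat.cast_ne_zero.mpr (by omega)
  have hRp : ((Rp (k + 1) : ℝ) : ℂ) = (q - 1) ^ k / q ^ (k + 1) := by
    simp only [Rp, Nat.add_sub_cancel, hqdef]
    push_cast
    ring
  -- main claim: (q-1)*T z = q is impossible on the cut plane
  have main : ∀ z ∈ cutPlane (k + 1), ¬ (q - 1) * T z = q := by
    intro z hz h2
    have e := heq z hz
    set t := T z with ht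
    have e1 : z * t ^ (k + 1) = t - 1 := by linear_combination e
    have hzq : z * q ^ (k + 1) = (q - 1) ^ k := by
      calc z * q ^ (k + 1) = z * ((q - 1) * t) ^ (k + 1) := by rw [h2]
        _ = (q - 1) ^ (k + 1) * (z * t ^ (k + 1)) := by rw [mul_pow]; ring
        _ = (q - 1) ^ (k + 1) * (t - 1) := by rw [e1]
        _ = (q - 1) ^ k * ((q - 1) * t) - (q - 1) ^ (k + 1) := by ring
        _ = (q - 1) ^ k * q - (q - 1) ^ (k + 1) := by rw [h2]
        _ = (q - 1) ^ k := by ring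
    have hz' : z = ((Rp (k + 1) : ℝ) : ℂ) := by
      rw [hRp]
      field_simp
      linear_combination hzq
    exact hz ⟨Rp (k + 1), Set.self_mem_Ici, hz'.symm⟩
  have first : ∀ z ∈ cutPlane (k + 1), 1 - q * z * T z ^ k ≠ 0 := by
    intro z hz h1
    apply main z hz
    have e := heq z hz
    linear_combination (-q) * e - T z * h1
  refine ⟨first, fun z hz h2 => main z hz (by linear_combination h2), ?_, ?_⟩
  · have hden : AnalyticOnNhd ℂ (fun z => 1 - q * z * T z ^ k) (cutPlane (k + 1)) := by
      apply AnalyticOnNhd.sub analyticOnNhd_const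
      exact ((analyticOnNhd_const.mul (analyticOnNhd_id)).mul (hT.pow k))
    exact hden.inv first
  · intro z hz
    exact inv_ne_zero (first z hz)
end

section
/- As |z| → ∞ with z ∈ Ω_p, one has T(z) → 0 and z·T(z)^p → −1; i.e., for every δ > 0 there exists M > 0 such that |T(z)| < δ and |z·T(z)^p + 1| < δ for all z ∈ Ω_p with |z| > M. -/
/-- Let `T` be analytic on `Ω_p` with `z T(z)^p − T(z) + 1 = 0` there.  Then as `|z| → ∞`
in `Ω_p`, `T(z) → 0` and `z T(z)^p → −1`: for every `δ > 0` there is `M > 0` such that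
`|T(z)| < δ` and `|z T(z)^p + 1| < δ` for all `z ∈ Ω_p` with `|z| > M`. -/
theorem fussCatalan_T_tendsto_zero (p : ℕ) (hp : 2 ≤ p) (T : ℂ → ℂ)
    (hT : AnalyticOnNhd ℂ T (cutPlane p))
    (heq : ∀ z ∈ cutPlane p, z * T z ^ p - T z + 1 = 0) :
    ∀ δ : ℝ, 0 < δ → ∃ M : ℝ, 0 < M ∧
      ∀ z ∈ cutPlane p, M < ‖z‖ → ‖T z‖ < δ ∧ ‖z * T z ^ p + 1‖ < δ := by
  intro δ hδ
  have hδp : 0 < δ ^ p := pow_pos hδ p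
  refine ⟨2 + 2 / δ ^ p, by positivity, ?_⟩
  intro z hz hM
  have h := heq z hz
  have hT1 : z * T z ^ p + 1 = T z := by linear_combination h
  have hTm : z * T z ^ p = T z - 1 := by linear_combination h
  have hdpos : (0:ℝ) < 2 / δ ^ p := by positivity
  have hz2 : (2:ℝ) < ‖z‖ := by linarith
  have hnorm : ‖z‖ * ‖T z‖ ^ p ≤ ‖T z‖ + 1 := by
    calc ‖z‖ * ‖T z‖ ^ p = ‖z * T z ^ p‖ := by rw [norm_mul, norm_pow]
      _ = ‖T z - 1‖ := by rw [hTm]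
      _ ≤ ‖T z‖ + 1 := by simpa using norm_sub_le (T z) 1
  have hlt1 : ‖T z‖ < 1 := by
    by_contra hge
    push_neg at hge
    have h1 : ‖T z‖ ≤ ‖T z‖ ^ p := le_self_pow₀ (by linarith) (by omega)
    nlinarith [norm_nonneg (T z)]
  have hTp : ‖T z‖ ^ p < δ ^ p := by
    have hb : ‖z‖ * ‖T z‖ ^ p < 2 := by linarith
    have hzδ : 2 / δ ^ p < ‖z‖ := by linarith
    have h2 : 2 < ‖z‖ * δ ^ p := by
      rw [div_lt_iff₀ hδp] at hzδ; linarith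
    have hzpos : (0:ℝ) < ‖z‖ := by linarith
    nlinarith
  have hTδ : ‖T z‖ < δ := by
    by_contra hge
    push_neg at hge
    exact absurd (pow_le_pow_left₀ hδ.le hge p) (not_le.mpr hTp)
  exact ⟨hTδ, by rwa [hT1]⟩
end

section
/- For every ε ∈ (0, π) there exists a constant C > 0 such that |S(z)| ≤ C·(1 + log(1 + |z|)) for all z ∈ ℂ_ε; that is, S grows at most logarithmically at infinity in the sector. -/
/-- The open sector `ℂ_ε = {z : |arg z| > ε}` (principal argument). -/
def sector (ε : ℝ) : Set ℂ := {z : ℂ | ε < |Complex.arg z|}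

open Set Filter Topology Complex

def closedSector (ε : ℝ) : Set ℂ := {z : ℂ | ε ≤ |arg z|}

theorem sector_subset_closedSector {ε : ℝ} : sector ε ⊆ closedSector ε :=
  fun _ hz => le_of_lt (α := ℝ) hz

theorem isOpen_cutPlane (p : ℕ) : IsOpen (cutPlane p) :=
  (isometry_ofReal.isClosedEmbedding.isClosedMap _ isClosed_Ici).isOpen_compl

theorem zero_mem_cutPlane {p : ℕ} (hp : 1 ≤ p) : (0 : ℂ) ∈ cutPlane p := by
  rintro ⟨x, hx, hx0⟩
  have hRp : 0 < Rp p := by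
    unfold Rp
    rcases (p - 1).eq_zero_or_pos with h | h
    · rw [h, pow_zero]; positivity
    · positivity
  have : x = 0 := by exact_mod_cast hx0
  exact (hx.trans_eq this).not_gt hRp

theorem closedSector_subset_cutPlane (p : ℕ) {ε : ℝ} (hε : 0 < ε) :
    closedSector ε ⊆ cutPlane p := by
  rintro _ hz ⟨x, hx, rfl⟩
  have hx0 : 0 ≤ x := le_trans (by unfold Rp; positivity) hx
  simp only [closedSector, mem_ofPred_eq, arg_ofReal_of_nonneg hx0, abs_zero] at hz
  exact hz.not_gt hε

theorem isClosed_closedSector_union_zero {ε : ℝ} (hε : ε ≤ Real.pi) :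
    IsClosed (closedSector ε ∪ {0}) := by
  have hcompl : (closedSector ε ∪ {0})ᶜ = slitPlane ∩ (fun w => |arg w|) ⁻¹' Iio ε := by
    ext w
    simp only [closedSector, mem_compl_iff, mem_union, mem_ofPred_eq, mem_singleton_iff, not_or,
      not_le, mem_inter_iff, mem_slitPlane_iff_arg, mem_preimage, mem_Iio]
    constructor
    · rintro ⟨harg, hw⟩
      refine ⟨⟨fun hπ => ?_, hw⟩, harg⟩
      rw [hπ, abs_of_pos Real.pi_pos] at harg
      exact harg.not_ge hε
    · rintro ⟨⟨-, hw⟩, harg⟩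
      exact ⟨harg, hw⟩
  rw [← isOpen_compl_iff, hcompl]
  exact (continuous_abs.comp_continuousOn continuousOn_arg).isOpen_inter_preimage
    isOpen_slitPlane isOpen_Iio

theorem ofReal_mul_mem_closedSector {ε s : ℝ} {z : ℂ} (hs : 0 < s) (hz : z ∈ closedSector ε) :
    (s : ℂ) * z ∈ closedSector ε := by
  simpa only [closedSector, mem_ofPred_eq, arg_real_mul z hs] using hz

variable {E : Type*} [NormedAddCommGroup E]

theorem exists_bound_on_closedSector_of_norm_le {f : ℂ → E} {ε : ℝ} (hε : ε ≤ Real.pi)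
    (hf : ContinuousOn f (closedSector ε ∪ {0})) (r : ℝ) :
    ∃ B, ∀ z ∈ closedSector ε, ‖z‖ ≤ r → ‖f z‖ ≤ B := by
  obtain ⟨B, hB⟩ := ((isCompact_closedBall (0 : ℂ) r).inter_right
    (isClosed_closedSector_union_zero hε)).exists_bound_of_continuousOn
    (hf.mono inter_subset_right)
  exact ⟨B, fun z hz hzr => hB z ⟨mem_closedBall_zero_iff.2 hzr, Or.inl hz⟩⟩

variable [NormedSpace ℂ E]

theorem norm_sub_le_mul_log_of_norm_smul_deriv_le {f : ℂ → E} {u : ℂ} {r R M : ℝ}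
    (hr : 0 < r) (hrR : r ≤ R)
    (hf : ∀ s ∈ Icc r R, DifferentiableAt ℂ f (s * u))
    (hM : ∀ s ∈ Icc r R, ‖((s : ℂ) * u) • deriv f (s * u)‖ ≤ M) :
    ‖f (R * u) - f (r * u)‖ ≤ M * Real.log (R / r) := by
  have hR : 0 < R := hr.trans_le hrR
  have hexp : ∀ t ∈ Icc (Real.log r) (Real.log R), Real.exp t ∈ Icc r R := fun t ht =>
    ⟨by simpa [Real.exp_log hr] using Real.exp_le_exp.2 ht.1,
      by simpa [Real.exp_log hR] using Real.exp_le_exp.2 ht.2⟩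
  have hderiv : ∀ t ∈ Icc (Real.log r) (Real.log R),
      HasDerivWithinAt (fun t : ℝ => f (Real.exp t * u))
        ((Real.exp t * u) • deriv f (Real.exp t * u)) (Icc (Real.log r) (Real.log R)) t := by
    intro t ht
    have hray : HasDerivAt (fun t : ℝ => (Real.exp t : ℂ) * u) (Real.exp t * u) t :=
      (Real.hasDerivAt_exp t).ofReal_comp.mul_const u
    exact ((hf _ (hexp t ht)).hasDerivAt.scomp t hray).hasDerivWithinAt
  have hmvt := (convex_Icc (Real.log r) (Real.log R)).norm_image_sub_le_of_norm_hasDerivWithin_le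
    hderiv (fun t ht => hM _ (hexp t ht)) (left_mem_Icc.2 (Real.log_le_log hr hrR))
    (right_mem_Icc.2 (Real.log_le_log hr hrR))
  rwa [Real.exp_log hr, Real.exp_log hR,
    Real.norm_of_nonneg (sub_nonneg.2 (Real.log_le_log hr hrR)), ← Real.log_div hR.ne' hr.ne']
    at hmvt

theorem norm_le_add_mul_log_of_mem_closedSector {f : ℂ → E} {ε r M B : ℝ} {z : ℂ} (hr : 0 < r)
    (hB : ∀ w ∈ closedSector ε, ‖w‖ ≤ r → ‖f w‖ ≤ B)
    (hdiff : ∀ w ∈ closedSector ε, r ≤ ‖w‖ → DifferentiableAt ℂ f w)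
    (hM : ∀ w ∈ closedSector ε, r ≤ ‖w‖ → ‖w • deriv f w‖ ≤ M)
    (hz : z ∈ closedSector ε) (hrz : r ≤ ‖z‖) :
    ‖f z‖ ≤ B + M * Real.log (‖z‖ / r) := by
  have hz0 : 0 < ‖z‖ := hr.trans_le hrz
  have hnorm : ∀ s : ℝ, 0 < s → ‖(s : ℂ) * z‖ = s * ‖z‖ := fun s hs => by
    rw [norm_mul, norm_real, Real.norm_of_nonneg hs.le]
  have hs₀ : 0 < r / ‖z‖ := by positivity
  have hfar : ∀ s ∈ Icc (r / ‖z‖) 1, (s : ℂ) * z ∈ closedSector ε ∧ r ≤ ‖(s : ℂ) * z‖ :=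
    fun s hs => ⟨ofReal_mul_mem_closedSector (hs₀.trans_le hs.1) hz, by
      rw [hnorm s (hs₀.trans_le hs.1), ← div_le_iff₀ hz0]; exact hs.1⟩
  have hmvt := norm_sub_le_mul_log_of_norm_smul_deriv_le hs₀ ((div_le_one hz0).2 hrz)
    (fun s hs => hdiff _ (hfar s hs).1 (hfar s hs).2)
    (fun s hs => hM _ (hfar s hs).1 (hfar s hs).2)
  rw [ofReal_one, one_mul, one_div_div] at hmvt
  have hstart : ‖f ((r / ‖z‖ : ℝ) * z)‖ ≤ B :=
    hB _ (ofReal_mul_mem_closedSector hs₀ hz) (by rw [hnorm _ hs₀, div_mul_cancel₀ _ hz0.ne'])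
  calc ‖f z‖ ≤ ‖f z - f ((r / ‖z‖ : ℝ) * z)‖ + ‖f ((r / ‖z‖ : ℝ) * z)‖ :=
        norm_le_norm_sub_add _ _
    _ ≤ B + M * Real.log (‖z‖ / r) := by linarith

theorem exists_norm_le_mul_one_add_log {f : ℂ → E} {ε r M : ℝ} (hε : ε ≤ Real.pi) (hr : 1 ≤ r)
    (hcont : ContinuousOn f (closedSector ε ∪ {0}))
    (hdiff : ∀ w ∈ closedSector ε, r ≤ ‖w‖ → DifferentiableAt ℂ f w)
    (hM : ∀ w ∈ closedSector ε, r ≤ ‖w‖ → ‖w • deriv f w‖ ≤ M) :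
    ∃ C, 0 < C ∧ ∀ z ∈ closedSector ε, ‖f z‖ ≤ C * (1 + Real.log (1 + ‖z‖)) := by
  obtain ⟨B, hB⟩ := exists_bound_on_closedSector_of_norm_le hε hcont r
  refine ⟨max B 0 + |M| + 1, by positivity, fun z hz => ?_⟩
  have hlog : 0 ≤ Real.log (1 + ‖z‖) := Real.log_nonneg (by linarith [norm_nonneg z])
  suffices ‖f z‖ ≤ max B 0 + |M| * Real.log (1 + ‖z‖) by
    nlinarith [le_max_right B 0, abs_nonneg M]
  rcases le_or_gt ‖z‖ r with hzr | hrz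
  · nlinarith [hB z hz hzr, le_max_left B 0, abs_nonneg M]
  have hlog_nonneg : 0 ≤ Real.log (‖z‖ / r) :=
    Real.log_nonneg ((one_le_div (by linarith)).2 hrz.le)
  have hlog_le : Real.log (‖z‖ / r) ≤ Real.log (1 + ‖z‖) :=
    Real.log_le_log (div_pos (by linarith) (by linarith))
      ((div_le_self (by linarith) hr).trans (by linarith))
  calc ‖f z‖ ≤ B + M * Real.log (‖z‖ / r) :=
        norm_le_add_mul_log_of_mem_closedSector (by linarith) hB hdiff hM hz hrz.le
    _ ≤ max B 0 + |M| * Real.log (1 + ‖z‖) := add_le_add (le_max_left B 0)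
        ((mul_le_mul_of_nonneg_right (le_abs_self M) hlog_nonneg).trans
          (mul_le_mul_of_nonneg_left hlog_le (abs_nonneg M)))

theorem HasDerivAt.eq_zero_of_eventuallyEq_const {𝕜 F : Type*} [NontriviallyNormedField 𝕜]
    [NormedAddCommGroup F] [NormedSpace 𝕜 F] {f : 𝕜 → F} {f' c : F} {x : 𝕜}
    (hf : HasDerivAt f f' x) (h : f =ᶠ[𝓝 x] fun _ => c) : f' = 0 :=
  hf.unique ((hasDerivAt_const x c).congr_of_eventuallyEq h)

theorem mul_deriv_mul_sq_eq {p : ℕ} (hp : 1 ≤ p) {T S : ℂ → ℂ} {z : ℂ}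
    (hT : DifferentiableAt ℂ T z) (hS : DifferentiableAt ℂ S z)
    (heq : ∀ᶠ w in 𝓝 z, w * T w ^ p - T w + 1 = 0)
    (hSF : ∀ᶠ w in 𝓝 z, exp (S w) * (1 - p * w * T w ^ (p - 1)) = 1) :
    z * deriv S z * ((p : ℂ) - ((p : ℂ) - 1) * T z) ^ 2 = p * (T z - 1) := by
  obtain ⟨q, rfl⟩ : ∃ q, p = q + 1 := ⟨p - 1, by omega⟩
  rw [Nat.add_sub_cancel] at hSF
  have hT' := hT.hasDerivAt
  have hTD : deriv T z * (1 - (q + 1) * z * T z ^ q) = T z ^ (q + 1) := by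
    have h := ((((hasDerivAt_id z).mul (hT'.pow (q + 1))).sub hT').add_const
      1).eq_zero_of_eventuallyEq_const heq
    simp only [id, Pi.pow_apply, Nat.add_sub_cancel] at h
    push_cast at h
    linear_combination -h
  have hSD : deriv S z * (1 - (q + 1) * z * T z ^ q)
      = (q + 1) * T z ^ q + (q + 1) * z * (q * T z ^ (q - 1) * deriv T z) := by
    have h := ((hS.hasDerivAt.cexp).mul ((((hasDerivAt_id z).const_mul (↑(q + 1) : ℂ)).mul
      (hT'.pow q)).const_sub 1)).eq_zero_of_eventuallyEq_const hSF
    simp only [id, Pi.pow_apply, Pi.mul_apply] at h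
    push_cast at h
    refine sub_eq_zero.1 ((mul_eq_zero.1 ?_).resolve_left (exp_ne_zero (S z)))
    linear_combination h
  have hzT : z * T z ^ (q + 1) = T z - 1 := by linear_combination heq.self_of_nhds
  have hpow : (q : ℂ) * T z ^ (q - 1) * T z = q * T z ^ q := by
    rcases q with _ | q <;> simp [pow_succ, mul_assoc]
  push_cast
  set t := T z
  set D := 1 - (q + 1) * z * t ^ q
  -- `D t = p - (p - 1) t` by `hzT`, so the left side is `z t² D (s' D)`; expand with `hSD`, `hTD`.
  linear_combination (z * t ^ 2 * D) * hSD + ((q + 1) * q * z ^ 2 * t ^ (q - 1) * t ^ 2) * hTD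
    + ((q + 1) * z ^ 2 * t ^ (q + 2)) * hpow
    + ((q + 1) * (2 - t - (z * t ^ (q + 1) - t + 1))
      + z * deriv S z * (q + 1) * ((q + 1) - q * t + D * t)) * hzT

theorem norm_le_one_of_mul_pow_eq {p : ℕ} (hp : 1 ≤ p) {z t : ℂ} (hz : 2 ≤ ‖z‖)
    (h : z * t ^ p = t - 1) : ‖t‖ ≤ 1 := by
  by_contra! ht
  have hpow : ‖t‖ ≤ ‖t‖ ^ p := le_self_pow₀ ht.le (by omega)
  have hnorm : ‖z‖ * ‖t‖ ^ p ≤ ‖t‖ + 1 := by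
    rw [← norm_pow, ← norm_mul, h]
    exact (norm_sub_le _ _).trans_eq (by rw [norm_one])
  nlinarith

theorem one_le_norm_natCast_sub_mul {p : ℕ} (hp : 1 ≤ p) {t : ℂ} (ht : ‖t‖ ≤ 1) :
    1 ≤ ‖(p : ℂ) - ((p : ℂ) - 1) * t‖ := by
  have hp' : (1 : ℝ) ≤ p := by exact_mod_cast hp
  have hcoef : ‖(p : ℂ) - 1‖ = p - 1 := by
    rw [← Nat.cast_pred hp, Complex.norm_natCast, Nat.cast_pred hp]
  calc (1 : ℝ) ≤ p - (p - 1) * ‖t‖ := by nlinarith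
    _ = ‖(p : ℂ)‖ - ‖((p : ℂ) - 1) * t‖ := by rw [norm_mul, hcoef, Complex.norm_natCast]
    _ ≤ ‖(p : ℂ) - ((p : ℂ) - 1) * t‖ := norm_sub_norm_le _ _

theorem norm_mul_deriv_le_two_mul {p : ℕ} (hp : 1 ≤ p) {T S : ℂ → ℂ} {z : ℂ} (hz : 2 ≤ ‖z‖)
    (hT : DifferentiableAt ℂ T z) (hS : DifferentiableAt ℂ S z)
    (heq : ∀ᶠ w in 𝓝 z, w * T w ^ p - T w + 1 = 0)
    (hSF : ∀ᶠ w in 𝓝 z, exp (S w) * (1 - p * w * T w ^ (p - 1)) = 1) :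
    ‖z * deriv S z‖ ≤ 2 * p := by
  have ht := norm_le_one_of_mul_pow_eq (t := T z) hp hz (by linear_combination heq.self_of_nhds)
  have hQ := one_le_norm_natCast_sub_mul hp ht
  have hnorm : ‖z * deriv S z‖ * ‖(p : ℂ) - ((p : ℂ) - 1) * T z‖ ^ 2 = p * ‖T z - 1‖ := by
    rw [← norm_pow, ← norm_mul, mul_deriv_mul_sq_eq hp hT hS heq hSF, norm_mul,
      Complex.norm_natCast]
  have hsub : ‖T z - 1‖ ≤ 2 := (norm_sub_le _ _).trans (by rw [norm_one]; linarith)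
  calc ‖z * deriv S z‖ ≤ ‖z * deriv S z‖ * ‖(p : ℂ) - ((p : ℂ) - 1) * T z‖ ^ 2 :=
        le_mul_of_one_le_right (norm_nonneg _) (one_le_pow₀ hQ)
    _ = p * ‖T z - 1‖ := hnorm
    _ ≤ 2 * p := by nlinarith [Nat.cast_nonneg (α := ℝ) p]

theorem fussCatalan_S_log_growth_general (p : ℕ) (hp : 2 ≤ p) (T S : ℂ → ℂ)
    (hT : AnalyticOnNhd ℂ T (cutPlane p))
    (heq : ∀ z ∈ cutPlane p, z * T z ^ p - T z + 1 = 0)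
    (hne : ∀ z ∈ cutPlane p, 1 - (p : ℂ) * z * T z ^ (p - 1) ≠ 0)
    (hS : AnalyticOnNhd ℂ S (cutPlane p))
    (hSF : ∀ z ∈ cutPlane p,
      Complex.exp (S z) = (1 - (p : ℂ) * z * T z ^ (p - 1))⁻¹)
    (ε : ℝ) (hε : ε ∈ Set.Ioo 0 Real.pi) :
    ∃ C : ℝ, 0 < C ∧ ∀ z ∈ sector ε,
      ‖S z‖ ≤ C * (1 + Real.log (1 + ‖z‖)) := by
  have hsub : closedSector ε ⊆ cutPlane p := closedSector_subset_cutPlane p hε.1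
  have hderiv : ∀ w ∈ closedSector ε, 2 ≤ ‖w‖ → ‖w • deriv S w‖ ≤ 2 * p := fun w hw hw2 => by
    have hnhds := (isOpen_cutPlane p).mem_nhds (hsub hw)
    exact norm_mul_deriv_le_two_mul (by omega) hw2 (hT w (hsub hw)).differentiableAt
      (hS w (hsub hw)).differentiableAt (eventually_of_mem hnhds heq)
      (eventually_of_mem hnhds fun v hv => by rw [hSF v hv, inv_mul_cancel₀ (hne v hv)])
  obtain ⟨C, hC, hbound⟩ := exists_norm_le_mul_one_add_log hε.2.le one_le_two
    (hS.continuousOn.mono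
      (union_subset hsub (singleton_subset_iff.2 (zero_mem_cutPlane (by omega)))))
    (fun w hw _ => (hS w (hsub hw)).differentiableAt) hderiv
  exact ⟨C, hC, fun z hz => hbound z (sector_subset_closedSector hz)⟩

/-- Let `T` be analytic on `Ω_p` with `z T(z)^p − T(z) + 1 = 0` and
`1 − p z T(z)^{p−1} ≠ 0` there; set `F(z) = 1/(1 − p z T(z)^{p−1})`, and let `S` be
analytic on `Ω_p` with `S(0) = 0` and `exp(S(z)) = F(z)` on `Ω_p`.  Then for every
`ε ∈ (0, π)` there is `C > 0` with `|S(z)| ≤ C (1 + log(1 + |z|))` for all `z ∈ ℂ_ε`. -/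
theorem fussCatalan_S_log_growth (p : ℕ) (hp : 2 ≤ p) (T S : ℂ → ℂ)
    (hT : AnalyticOnNhd ℂ T (cutPlane p))
    (heq : ∀ z ∈ cutPlane p, z * T z ^ p - T z + 1 = 0)
    (hne : ∀ z ∈ cutPlane p, 1 - (p : ℂ) * z * T z ^ (p - 1) ≠ 0)
    (hS : AnalyticOnNhd ℂ S (cutPlane p)) (hS0 : S 0 = 0)
    (hSF : ∀ z ∈ cutPlane p,
      Complex.exp (S z) = (1 - (p : ℂ) * z * T z ^ (p - 1))⁻¹)
    (ε : ℝ) (hε : ε ∈ Set.Ioo 0 Real.pi) :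
    ∃ C : ℝ, 0 < C ∧ ∀ z ∈ sector ε,
      ‖S z‖ ≤ C * (1 + Real.log (1 + ‖z‖)) :=
  fussCatalan_S_log_growth_general p hp T S hT heq hne hS hSF ε hε
end

section
/- Let n ≥ 1, let G be a forest (an acyclic simple graph) on the vertex set {1, …, n}, and let w assign to each edge of G a real number in [0, 1]. Define the real symmetric n×n matrix X by: X_{ii} = 1 for all i; for i ≠ j in the same connected component of G, X_{ij} is the minimum of w(ℓ) over the edges ℓ of the unique path in G from i to j; and X_{ij} = 0 if i and j lie in different connected components. Then X is positive semidefinite. -/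
/-!
For `t ∈ (0, 1]` the relation `t ≤ X i j` is an equivalence relation: concatenating paths shows
that path minima satisfy the ultrametric inequality `min (X i j) (X j k) ≤ X i k`. The indicator
matrix of an equivalence relation is the Gram matrix of the indicators of its classes, hence
positive semidefinite, and by the layer-cake formula `X i j = ∫₀¹ [t ≤ X i j] dt` the matrix `X`
is an integral of such matrices.
-/

open MeasureTheory Set

theorem ite_le_eq_indicator (x : ℝ) :
    (fun t => if t ≤ x then (1 : ℝ) else 0) = (Iic x).indicator 1 := by
  ext t
  simp [indicator_apply]

theorem setIntegral_Ioc_zero_one_ite_le {x : ℝ} (hx : x ∈ Icc (0 : ℝ) 1) :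
    ∫ t in Ioc 0 1, (if t ≤ x then (1 : ℝ) else 0) = x := by
  rw [ite_le_eq_indicator, setIntegral_indicator measurableSet_Iic, Ioc_inter_Iic,
    min_eq_right hx.2]
  simp [hx.1]

theorem integrableOn_Ioc_ite_le (a b x : ℝ) :
    IntegrableOn (fun t => if t ≤ x then (1 : ℝ) else 0) (Ioc a b) := by
  rw [ite_le_eq_indicator]
  exact (integrableOn_const measure_Ioc_lt_top.ne).indicator measurableSet_Iic

namespace Matrix

variable {ι : Type*}

theorem posSemidef_ite_eq [Fintype ι] {R κ : Type*} [CommRing R] [PartialOrder R] [StarRing R]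
    [StarOrderedRing R] [Fintype κ] [DecidableEq κ] (f : ι → κ) :
    (of fun i j => if f i = f j then (1 : R) else 0).PosSemidef := by
  let B : Matrix κ ι R := of fun k i => if f i = k then 1 else 0
  convert posSemidef_conjTranspose_mul_self B using 1
  ext i j
  simp [B, mul_apply, eq_comm, apply_ite star]

theorem posSemidef_ite_of_equivalence [Fintype ι] {R : Type*} [CommRing R] [PartialOrder R]
    [StarRing R] [StarOrderedRing R] {r : ι → ι → Prop} [DecidableRel r] (hr : Equivalence r) :
    (of fun i j => if r i j then (1 : R) else 0).PosSemidef := by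
  classical
  let s : Setoid ι := ⟨r, hr⟩
  convert posSemidef_ite_eq (R := R) (Quotient.mk s) using 1
  ext i j
  simp only [of_apply, Quotient.eq]
  rfl

theorem posSemidef_of_integral [Fintype ι] {α : Type*} [MeasurableSpace α] {μ : Measure α}
    {M : α → Matrix ι ι ℝ} (hM : ∀ᵐ t ∂μ, (M t).PosSemidef)
    (hint : ∀ i j, Integrable (fun t => M t i j) μ) :
    (of fun i j => ∫ t, M t i j ∂μ).PosSemidef := by
  refine .of_dotProduct_mulVec_nonneg ?_ fun x => ?_
  · ext i j
    simp only [conjTranspose_apply, of_apply, star_trivial]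
    exact integral_congr_ae (hM.mono fun t ht => ht.1.apply i j)
  · have hquad : star x ⬝ᵥ (of fun i j => ∫ t, M t i j ∂μ) *ᵥ x
        = ∫ t, star x ⬝ᵥ M t *ᵥ x ∂μ := by
      simp only [dotProduct, mulVec, of_apply, Pi.star_apply, star_trivial]
      rw [integral_finsetSum _ fun i _ => (integrable_finsetSum _ fun j _ =>
        ((hint i j).mul_const _)).const_mul _]
      refine Finset.sum_congr rfl fun i _ => ?_
      rw [integral_const_mul, integral_finsetSum _ fun j _ => (hint i j).mul_const _]
      simp_rw [integral_mul_const]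
    rw [hquad]
    exact integral_nonneg_of_ae (hM.mono fun t ht => ht.dotProduct_mulVec_nonneg x)

theorem equivalence_le_of_ultrametric {X : Matrix ι ι ℝ} (hsymm : X.IsSymm) {t : ℝ}
    (hdiag : ∀ i, t ≤ X i i) (hultra : ∀ i j k, min (X i j) (X j k) ≤ X i k) :
    Equivalence fun i j => t ≤ X i j where
  refl := hdiag
  symm {i j} h := hsymm.apply i j ▸ h
  trans {i j k} hij hjk := (le_min hij hjk).trans (hultra i j k)

theorem posSemidef_of_ultrametric [Fintype ι] {X : Matrix ι ι ℝ}
    (hsymm : X.IsSymm) (hdiag : ∀ i, X i i = 1) (hX : ∀ i j, X i j ∈ Icc (0 : ℝ) 1)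
    (hultra : ∀ i j k, min (X i j) (X j k) ≤ X i k) : X.PosSemidef := by
  classical
  have hlevel : ∀ t ∈ Ioc (0 : ℝ) 1,
      (of fun i j => if t ≤ X i j then (1 : ℝ) else 0).PosSemidef :=
    fun t ht => posSemidef_ite_of_equivalence
      (equivalence_le_of_ultrametric hsymm (fun i => hdiag i ▸ ht.2) hultra)
  convert posSemidef_of_integral (ae_restrict_of_forall_mem measurableSet_Ioc hlevel)
    fun i j => integrableOn_Ioc_ite_le 0 1 (X i j)
  ext i j
  exact (setIntegral_Ioc_zero_one_ite_le (hX i j)).symm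

end Matrix

namespace SimpleGraph

variable {V : Type*} {G : SimpleGraph V} {w : Sym2 V → ℝ} {X : V → V → ℝ}

def PathMinWeight (G : SimpleGraph V) (w : Sym2 V → ℝ) (X : V → V → ℝ) : Prop :=
  ∀ i j, i ≠ j → ∀ P : G.Walk i j, P.IsPath → (P.edges.map w).minimum = (X i j : WithTop ℝ)

namespace PathMinWeight

theorem le_of_walk (h : G.PathMinWeight w X) {i j : V} (hij : i ≠ j) (P : G.Walk i j) {t : ℝ}
    (hP : ∀ e ∈ P.edges, t ≤ w e) : t ≤ X i j := by
  classical
  rw [← WithTop.coe_le_coe, ← h i j hij P.toPath P.toPath.2]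
  refine List.le_minimum_of_forall_le fun a ha => ?_
  obtain ⟨e, he, rfl⟩ := List.mem_map.mp ha
  exact WithTop.coe_le_coe.mpr (hP e (P.edges_toPath_subset_edges he))

theorem exists_walk (h : G.PathMinWeight w X) {i j : V} (hij : i ≠ j) (hr : G.Reachable i j) :
    ∃ P : G.Walk i j, (∃ e ∈ P.edges, w e = X i j) ∧ ∀ e ∈ P.edges, X i j ≤ w e := by
  classical
  obtain ⟨P⟩ := hr
  obtain ⟨hmem, hle⟩ := List.minimum_eq_coe_iff.mp (h i j hij P.toPath P.toPath.2)
  exact ⟨P.toPath, List.mem_map.mp hmem, fun e he => hle _ (List.mem_map_of_mem he)⟩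

theorem symm (h : G.PathMinWeight w X) (hsep : ∀ i j, ¬ G.Reachable i j → X i j = 0)
    (i j : V) : X i j = X j i := by
  have hle : ∀ i j, X i j ≤ X j i := by
    intro i j
    rcases eq_or_ne i j with rfl | hij
    · rfl
    by_cases hr : G.Reachable i j
    · obtain ⟨P, -, hP⟩ := h.exists_walk hij hr
      exact h.le_of_walk hij.symm P.reverse (by simpa using hP)
    · rw [hsep i j hr, hsep j i (mt Reachable.symm hr)]
  exact le_antisymm (hle i j) (hle j i)

theorem mem_Icc (h : G.PathMinWeight w X) (hw : ∀ e ∈ G.edgeSet, w e ∈ Icc (0 : ℝ) 1)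
    (hdiag : ∀ i, X i i = 1) (hsep : ∀ i j, ¬ G.Reachable i j → X i j = 0) (i j : V) :
    X i j ∈ Icc (0 : ℝ) 1 := by
  rcases eq_or_ne i j with rfl | hij
  · simp [hdiag]
  by_cases hr : G.Reachable i j
  · obtain ⟨P, ⟨e, he, hwe⟩, -⟩ := h.exists_walk hij hr
    exact hwe ▸ hw e (P.edges_subset_edgeSet he)
  · simp [hsep i j hr]

theorem min_le (h : G.PathMinWeight w X) (hw : ∀ e ∈ G.edgeSet, w e ∈ Icc (0 : ℝ) 1)
    (hdiag : ∀ i, X i i = 1) (hsep : ∀ i j, ¬ G.Reachable i j → X i j = 0) (i j k : V) :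
    min (X i j) (X j k) ≤ X i k := by
  have hX := h.mem_Icc hw hdiag hsep
  rcases eq_or_ne i j with rfl | hij
  · exact min_le_right _ _
  rcases eq_or_ne j k with rfl | hjk
  · exact min_le_left _ _
  rcases eq_or_ne i k with rfl | hik
  · exact (min_le_left _ _).trans ((hX i j).2.trans (hdiag i).ge)
  by_cases hr : G.Reachable i j ∧ G.Reachable j k
  · obtain ⟨P, -, hP⟩ := h.exists_walk hij hr.1
    obtain ⟨Q, -, hQ⟩ := h.exists_walk hjk hr.2
    refine h.le_of_walk hik (P.append Q) fun e he => ?_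
    rcases List.mem_append.mp (Walk.edges_append P Q ▸ he) with he | he
    · exact (min_le_left _ _).trans (hP e he)
    · exact (min_le_right _ _).trans (hQ e he)
  · rw [not_and_or] at hr
    rcases hr with hr | hr
    · exact (min_le_left _ _).trans ((hsep i j hr).le.trans (hX i k).1)
    · exact (min_le_right _ _).trans ((hsep j k hr).le.trans (hX i k).1)

end PathMinWeight

end SimpleGraph

theorem forest_path_min_matrix_posSemidef_general (n : ℕ)
    (G : SimpleGraph (Fin n))
    (w : Sym2 (Fin n) → ℝ) (hw : ∀ e ∈ G.edgeSet, w e ∈ Set.Icc (0 : ℝ) 1)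
    (X : Matrix (Fin n) (Fin n) ℝ)
    (hdiag : ∀ i, X i i = 1)
    (hpath : ∀ i j, i ≠ j → ∀ P : G.Walk i j, P.IsPath →
      (P.edges.map w).minimum = (X i j : WithTop ℝ))
    (hsep : ∀ i j, ¬ G.Reachable i j → X i j = 0) :
    X.PosSemidef := by
  have hX : G.PathMinWeight w X := hpath
  exact Matrix.posSemidef_of_ultrametric (Matrix.IsSymm.ext fun i j => hX.symm hsep j i) hdiag
    (hX.mem_Icc hw hdiag hsep) (hX.min_le hw hdiag hsep)

/-- Let `G` be a forest on `{1, …, n}` with edge weights `w` in `[0,1]`.  Let `X` be the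
symmetric matrix with `X i i = 1`, `X i j` the minimum of the weights along the unique
path from `i` to `j` when `i ≠ j` are in the same component, and `X i j = 0` when `i, j`
lie in different components.  Then `X` is positive semidefinite. -/
theorem forest_path_min_matrix_posSemidef (n : ℕ) (hn : 1 ≤ n)
    (G : SimpleGraph (Fin n)) (hG : G.IsAcyclic)
    (w : Sym2 (Fin n) → ℝ) (hw : ∀ e ∈ G.edgeSet, w e ∈ Set.Icc (0 : ℝ) 1)
    (X : Matrix (Fin n) (Fin n) ℝ)
    (hdiag : ∀ i, X i i = 1)
    (hpath : ∀ i j, i ≠ j → ∀ P : G.Walk i j, P.IsPath →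
      (P.edges.map w).minimum = (X i j : WithTop ℝ))
    (hsep : ∀ i j, ¬ G.Reachable i j → X i j = 0) :
    X.PosSemidef :=
  forest_path_min_matrix_posSemidef_general n G w hw X hdiag hpath hsep
end

section
/- For every real K > 0 there exists η > 0 such that the series Σ_{n≥2} (1/n!) · Σ_{T} ∏_{i=1}^{n} (d_T(i) − 1)! · K^{d_T(i)} · η^{d_T(i)} converges, where the inner sum runs over all trees T on the labeled vertex set {1, …, n} and d_T(i) denotes the degree of vertex i in T. -/
/-!
Root the tree at a vertex `r` and map it to its parent function `V → V` (with `r ↦ r`), which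
determines the tree. Every vertex has at most one neighbour besides its children, so
`∏ (d(i) - 1)! ≤ ∏ |f⁻¹(i)|!` for the parent function `f`; summing over all `f : V → V` gives
the rising factorial `n (n + 1) ⋯ (2n - 1) ≤ n! 4ⁿ`. Since `∑ d(i) = 2(n - 1)`, taking
`Kη = 1/4` bounds the `n`-th term by `16 · 4⁻ⁿ`.
-/

open scoped Classical
open Finset Nat

section FiberFactorial

variable {β : Type*} [DecidableEq β]

lemma card_filter_cons_eq {m : ℕ} (b : β) (f : Fin m → β) (c : β) :
    #{a | (Fin.cons b f : Fin (m + 1) → β) a = c} = #{a | f a = c} + if b = c then 1 else 0 := by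
  rw [card_filter, card_filter, Fin.sum_univ_succ]
  simp [add_comm]

variable [Fintype β]

lemma factorial_add_ite_one (x : ℕ) (p : Prop) [Decidable p] :
    (x + if p then 1 else 0)! = x ! * if p then x + 1 else 1 := by
  split_ifs <;> simp [Nat.factorial_succ, mul_comm]

lemma prod_factorial_card_filter_cons {m : ℕ} (b : β) (f : Fin m → β) :
    ∏ c, (#{a | (Fin.cons b f : Fin (m + 1) → β) a = c})! =
      (∏ c, (#{a | f a = c})!) * (#{a | f a = b} + 1) := by
  simp only [card_filter_cons_eq, factorial_add_ite_one, prod_mul_distrib, prod_ite_eq, mem_univ,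
    if_true]

lemma sum_card_filter_add_one {α : Type*} [Fintype α] (f : α → β) :
    ∑ b, (#{a | f a = b} + 1) = Fintype.card α + Fintype.card β := by
  rw [sum_add_distrib, ← card_eq_sum_card_fiberwise (fun a _ => mem_univ (f a))]
  simp

-- Both sides count the ways to distribute `m` labelled items into `card β` ordered lists.
theorem sum_prod_factorial_card_fiber_fin (m : ℕ) :
    ∑ f : Fin m → β, ∏ b, (#{a | f a = b})! = (Fintype.card β).ascFactorial m := by
  induction m with
  | zero => simp
  | succ m ih =>
    rw [← Fintype.sum_equiv (Fin.consEquiv fun _ => β)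
      (fun p => ∏ c, (#{a | (Fin.cons p.1 p.2 : Fin (m + 1) → β) a = c})!) _ fun _ => rfl,
      Fintype.sum_prod_type, sum_comm]
    simp only [prod_factorial_card_filter_cons, ← mul_sum, sum_card_filter_add_one,
      Fintype.card_fin]
    rw [← sum_mul, ih, Nat.ascFactorial_succ, mul_comm, add_comm]

theorem sum_prod_factorial_card_fiber (α : Type*) [Fintype α] [DecidableEq α] :
    ∑ f : α → β, ∏ b, (#{a | f a = b})! = (Fintype.card β).ascFactorial (Fintype.card α) := by
  rw [← sum_prod_factorial_card_fiber_fin]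
  refine Fintype.sum_equiv ((Fintype.equivFin α).arrowCongr (Equiv.refl β)) _ _ fun f => ?_
  refine prod_congr rfl fun b _ => ?_
  congr 1
  exact card_equiv (Fintype.equivFin α) (by simp)

end FiberFactorial

namespace SimpleGraph

variable {V : Type*} (G : SimpleGraph V)

noncomputable def parent (r v : V) : V :=
  if h : G.Reachable v r then (h.some.toPath : G.Walk v r).getVert 1 else r

variable {G}

lemma parent_self (r : V) : G.parent r r = r := by
  simp [parent, Path.loop_eq]

lemma Connected.adj_parent (hG : G.Connected) {r v : V} (hv : v ≠ r) :
    G.Adj v (G.parent r v) := by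
  rw [parent, dif_pos (hG v r)]
  simpa using
    Walk.adj_getVert_succ (i := 0) _ (Walk.not_nil_iff_lt_length.mp (Walk.not_nil_of_ne hv))

lemma IsTree.parent_eq_or_parent_eq_of_adj (hG : G.IsTree) (r : V) {u v : V} (h : G.Adj u v) :
    G.parent r u = v ∨ G.parent r v = u := by
  have huniq (a b : V) (p q : G.Path a b) : p = q :=
    (isAcyclic_iff_subsingleton_path.mp hG.isAcyclic a b).elim p q
  set p : G.Path v r := (hG.connected v r).some.toPath with hp
  by_cases hu : u ∈ (p : G.Walk v r).support
  · right
    have hedge : (p : G.Walk v r).takeUntil u hu = Walk.cons h.symm Walk.nil :=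
      congrArg Subtype.val (huniq v u ⟨_, p.2.takeUntil hu⟩ (Path.singleton h.symm))
    have hsplit := (p : G.Walk v r).take_spec hu
    rw [hedge] at hsplit
    rw [parent, dif_pos (hG.connected v r), ← hp, ← hsplit]
    simp
  · left
    rw [parent, dif_pos (hG.connected u r),
      huniq u r (hG.connected u r).some.toPath ⟨_, p.2.cons (h := h) hu⟩]
    simp

lemma IsTree.adj_iff_parent (hG : G.IsTree) (r u v : V) :
    G.Adj u v ↔ (u ≠ r ∧ G.parent r u = v) ∨ (v ≠ r ∧ G.parent r v = u) := by
  refine ⟨fun h => ?_, ?_⟩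
  · rcases hG.parent_eq_or_parent_eq_of_adj r h with h' | h'
    · refine .inl ⟨?_, h'⟩
      rintro rfl
      exact h.ne (parent_self u ▸ h')
    · refine .inr ⟨?_, h'⟩
      rintro rfl
      exact h.ne (parent_self v ▸ h').symm
  · rintro (⟨hu, rfl⟩ | ⟨hv, rfl⟩)
    · exact hG.connected.adj_parent hu
    · exact (hG.connected.adj_parent hv).symm

lemma IsTree.ext_of_parent_eq {H : SimpleGraph V} (hG : G.IsTree) (hH : H.IsTree) {r : V}
    (h : G.parent r = H.parent r) : G = H := by
  ext u v
  rw [hG.adj_iff_parent r, hH.adj_iff_parent r, h]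

lemma IsTree.degree_le_card_parent_eq_add_one [Fintype V] [DecidableEq V] [DecidableRel G.Adj]
    (hG : G.IsTree) (r i : V) : G.degree i ≤ #{v | G.parent r v = i} + 1 := by
  rw [← card_neighborFinset_eq_degree]
  calc #(G.neighborFinset i) ≤ #(insert (G.parent r i) ({v | G.parent r v = i} : Finset V)) :=
        card_le_card fun j hj => by
          rw [mem_neighborFinset, hG.adj_iff_parent r] at hj
          simp only [mem_insert, mem_filter, mem_univ, true_and]
          tauto
    _ ≤ _ := card_insert_le _ _

lemma IsTree.prod_pow_degree {M : Type*} [CommMonoid M] [Fintype V] [DecidableRel G.Adj]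
    (hG : G.IsTree) (x : M) : ∏ i, x ^ G.degree i = x ^ (2 * (Fintype.card V - 1)) := by
  rw [prod_pow_eq_pow_sum, sum_degrees_eq_twice_card_edges, ← hG.card_edgeFinset,
    Nat.add_sub_cancel]

end SimpleGraph

open SimpleGraph

theorem sum_trees_prod_factorial_degree_sub_one_le {V : Type*} [Fintype V] [DecidableEq V]
    (r : V) :
    ∑ T ∈ {T : SimpleGraph V | T.IsTree}, ∏ i, (T.degree i - 1)! ≤
      (Fintype.card V).ascFactorial (Fintype.card V) := by
  calc ∑ T ∈ {T : SimpleGraph V | T.IsTree}, ∏ i, (T.degree i - 1)!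
      ≤ ∑ T ∈ {T : SimpleGraph V | T.IsTree}, ∏ i, (#{v | T.parent r v = i})! := by
        refine sum_le_sum fun T hT => prod_le_prod' fun i _ => factorial_le ?_
        have := (mem_filter.mp hT).2.degree_le_card_parent_eq_add_one r i
        omega
    _ = ∑ f ∈ image (fun T : SimpleGraph V => T.parent r) {T | T.IsTree},
          ∏ i, (#{v | f v = i})! := by
        rw [sum_image]
        intro T hT T' hT' h
        exact (mem_filter.mp hT).2.ext_of_parent_eq (mem_filter.mp hT').2 h
    _ ≤ ∑ f : V → V, ∏ i, (#{v | f v = i})! := sum_le_sum_of_subset (subset_univ _)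
    _ = (Fintype.card V).ascFactorial (Fintype.card V) := sum_prod_factorial_card_fiber V

lemma ascFactorial_self_le (n : ℕ) : n.ascFactorial n ≤ n ! * 4 ^ n := by
  rw [ascFactorial_eq_factorial_mul_choose']
  gcongr
  calc (n + n - 1).choose n ≤ 2 ^ (n + n - 1) := choose_le_two_pow _ _
    _ ≤ 2 ^ (2 * n) := pow_le_pow_right₀ one_le_two (by omega)
    _ = 4 ^ n := by rw [pow_mul]; norm_num

theorem sum_trees_prod_factorial_mul_pow_le {V : Type*} [Fintype V] [DecidableEq V] (r : V)
    {x : ℝ} (hx : 0 ≤ x) :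
    ∑ T ∈ {T : SimpleGraph V | T.IsTree}, ∏ i, ((T.degree i - 1)! : ℝ) * x ^ T.degree i ≤
      (Fintype.card V)! * 4 ^ Fintype.card V * x ^ (2 * (Fintype.card V - 1)) := by
  have hsum : ∑ T ∈ {T : SimpleGraph V | T.IsTree}, ∏ i, ((T.degree i - 1)! : ℝ) * x ^ T.degree i
      = (∑ T ∈ {T : SimpleGraph V | T.IsTree}, ∏ i, (T.degree i - 1)! : ℕ) *
          x ^ (2 * (Fintype.card V - 1)) := by
    rw [Nat.cast_sum, sum_mul]
    refine sum_congr rfl fun T hT => ?_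
    rw [prod_mul_distrib, (mem_filter.mp hT).2.prod_pow_degree, Nat.cast_prod]
  rw [hsum]
  gcongr
  exact_mod_cast (sum_trees_prod_factorial_degree_sub_one_le r).trans (ascFactorial_self_le _)

/-- For every `K > 0` there is `η > 0` such that the series
`Σ_{n ≥ 2} (1/n!) Σ_{T tree on {1,…,n}} Π_{i=1}^{n} (d_T(i) − 1)! K^{d_T(i)} η^{d_T(i)}`
converges, where the inner sum runs over all trees (connected acyclic simple graphs) on
the labeled vertex set `{1, …, n}` and `d_T(i)` is the degree of vertex `i` in `T`. -/
theorem tree_sum_series_summable (K : ℝ) (hK : 0 < K) :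
    ∃ η : ℝ, 0 < η ∧
      Summable (fun n : ℕ =>
        if 2 ≤ n then
          (1 / (Nat.factorial n : ℝ)) *
            ∑ T ∈ Finset.univ.filter
                (fun T : SimpleGraph (Fin n) => T.Connected ∧ T.IsAcyclic),
              ∏ i : Fin n,
                (Nat.factorial (T.degree i - 1) : ℝ) * K ^ T.degree i * η ^ T.degree i
        else 0) := by
  refine ⟨1 / (4 * K), by positivity, ?_⟩
  have hKη : K * (1 / (4 * K)) = 1 / 4 := by field_simp
  refine Summable.of_nonneg_of_le (fun n => by split_ifs <;> positivity) (fun n => ?_)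
    ((summable_geometric_of_lt_one (by norm_num : (0 : ℝ) ≤ 1 / 4) (by norm_num)).mul_left 16)
  split_ifs with hn
  · obtain ⟨m, rfl⟩ : ∃ m, n = m + 2 := ⟨n - 2, by omega⟩
    simp_rw [← isTree_iff, mul_assoc, ← mul_pow, hKη]
    calc 1 / ((m + 2)! : ℝ) * ∑ T ∈ {T : SimpleGraph (Fin (m + 2)) | T.IsTree},
          ∏ i, ((T.degree i - 1)! : ℝ) * (1 / 4) ^ T.degree i
        ≤ 1 / ((m + 2)! : ℝ) * ((m + 2)! * 4 ^ (m + 2) * (1 / 4) ^ (2 * (m + 1))) := by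
          gcongr
          simpa using sum_trees_prod_factorial_mul_pow_le (0 : Fin (m + 2)) (x := 1 / 4)
            (by norm_num)
      _ = 16 * (1 / 4) ^ (m + 2) := by
          rw [one_div_pow, one_div_pow]
          field_simp
          ring
  · positivity
end

section
/- For every integer p ≥ 2 and every real λ > 0, ∫_0^∞ e^{−t − λ t^p} dt = ∫_0^∞ e^{−t} / (1 + p·λ·t^{p−1}·τ(t)^{p−1}) dt, where for each t ≥ 0, τ(t) denotes the unique real number in (0, 1] satisfying λ·t^{p−1}·τ(t)^p + τ(t) = 1. -/
/-!
Substitute `s = x + λ x^p`. For `x > 0` the defining equation of `τ` forces `τ(s) = x / s`,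
so the denominator `1 + p λ s^{p-1} τ(s)^{p-1}` becomes `1 + p λ x^{p-1}`, which is exactly
the Jacobian `ds/dx`; the right-hand integral therefore turns into the left-hand one.
-/

open Set MeasureTheory

section AddMulPow

variable {p : ℕ} {c : ℝ}

theorem hasDerivAt_add_mul_pow (p : ℕ) (c x : ℝ) :
    HasDerivAt (fun x : ℝ => x + c * x ^ p) (1 + p * c * x ^ (p - 1)) x :=
  ((hasDerivAt_id x).add ((hasDerivAt_pow p x).const_mul c)).congr_deriv (by ring)

theorem strictMonoOn_add_mul_pow (hc : 0 ≤ c) :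
    StrictMonoOn (fun x : ℝ => x + c * x ^ p) (Ici 0) := fun _ hx _ _ hxy =>
  add_lt_add_of_lt_of_le hxy <| mul_le_mul_of_nonneg_left (pow_le_pow_left₀ hx hxy.le p) hc

theorem image_add_mul_pow_Ioi (hp : p ≠ 0) (hc : 0 ≤ c) :
    (fun x : ℝ => x + c * x ^ p) '' Ioi 0 = Ioi 0 := by
  apply Subset.antisymm
  · rintro _ ⟨x, hx : 0 < x, rfl⟩
    exact add_pos_of_pos_of_nonneg hx (by positivity)
  · intro s (hs : 0 < s)
    have hcont : ContinuousOn (fun x : ℝ => x + c * x ^ p) (Icc 0 s) := by fun_prop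
    have hs_le : s ≤ s + c * s ^ p := le_add_of_nonneg_right (by positivity)
    obtain ⟨x, hx, hxs⟩ := intermediate_value_Icc hs.le hcont ⟨by simp [hp, hs.le], hs_le⟩
    refine ⟨x, lt_of_le_of_ne hx.1 ?_, hxs⟩
    rintro rfl
    exact hs.ne (by simpa [hp] using hxs)

theorem mul_pow_sub_one_mul_div_pow_add_div (hp : p ≠ 0) (x : ℝ) {s : ℝ} (hs : s ≠ 0) :
    c * s ^ (p - 1) * (x / s) ^ p + x / s = (x + c * x ^ p) / s := by
  obtain ⟨q, rfl⟩ := Nat.exists_eq_succ_of_ne_zero hp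
  rw [Nat.succ_sub_one, div_pow, pow_succ s]
  field_simp
  ring

theorem eq_div_of_mul_pow_add_eq_one (hp : p ≠ 0) (hc : 0 ≤ c) {x σ : ℝ} (hx : 0 < x)
    (hσ : 0 ≤ σ) (h : c * (x + c * x ^ p) ^ (p - 1) * σ ^ p + σ = 1) :
    σ = x / (x + c * x ^ p) := by
  set s := x + c * x ^ p
  have hs : 0 < s := add_pos_of_pos_of_nonneg hx (by positivity)
  have hroot : c * s ^ (p - 1) * (x / s) ^ p + x / s = 1 := by
    rw [mul_pow_sub_one_mul_div_pow_add_div hp x hs.ne', div_self hs.ne']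
  refine (strictMonoOn_add_mul_pow (p := p) (by positivity : 0 ≤ c * s ^ (p - 1))).injOn
    hσ (div_nonneg hx.le hs.le) ?_
  linarith

end AddMulPow

/-- For `p ≥ 2`, `λ > 0`, and `τ(t)` the unique number in `(0,1]` with
`λ t^{p−1} τ(t)^p + τ(t) = 1`, one has
`∫_0^∞ e^{−t − λ t^p} dt = ∫_0^∞ e^{−t} / (1 + p λ t^{p−1} τ(t)^{p−1}) dt`. -/
theorem integral_exp_superexp_eq (p : ℕ) (hp : 2 ≤ p) (lam : ℝ) (hlam : 0 < lam)
    (tau : ℝ → ℝ)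
    (htau : ∀ t : ℝ, 0 ≤ t →
      tau t ∈ Set.Ioc (0 : ℝ) 1 ∧ lam * t ^ (p - 1) * tau t ^ p + tau t = 1) :
    (∫ t in Set.Ioi (0 : ℝ), Real.exp (-t - lam * t ^ p))
      = ∫ t in Set.Ioi (0 : ℝ),
          Real.exp (-t) / (1 + (p : ℝ) * lam * t ^ (p - 1) * tau t ^ (p - 1)) := by
  have hp0 : p ≠ 0 := by omega
  have hcv := integral_image_eq_integral_abs_deriv_smul measurableSet_Ioi
    (fun x _ => (hasDerivAt_add_mul_pow p lam x).hasDerivWithinAt)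
    ((strictMonoOn_add_mul_pow hlam.le).injOn.mono Ioi_subset_Ici_self)
    (fun t => Real.exp (-t) / (1 + (p : ℝ) * lam * t ^ (p - 1) * tau t ^ (p - 1)))
  rw [image_add_mul_pow_Ioi hp0 hlam.le] at hcv
  rw [hcv]
  refine setIntegral_congr_fun measurableSet_Ioi fun x (hx : 0 < x) => ?_
  set s := x + lam * x ^ p
  have hs : 0 < s := add_pos_of_pos_of_nonneg hx (by positivity)
  obtain ⟨⟨hτ_pos, -⟩, hτ_eq⟩ := htau s hs.le
  have hτ : tau s = x / s := eq_div_of_mul_pow_add_eq_one hp0 hlam.le hx hτ_pos.le hτ_eq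
  have hjac : 0 < 1 + p * lam * x ^ (p - 1) := by positivity
  have hden : 1 + p * lam * s ^ (p - 1) * tau s ^ (p - 1) = 1 + p * lam * x ^ (p - 1) := by
    rw [hτ, div_pow, mul_assoc _ (s ^ (p - 1)), mul_div_cancel₀ _ (pow_ne_zero _ hs.ne')]
  rw [hden, smul_eq_mul, abs_of_pos hjac, mul_div_cancel₀ _ hjac.ne', neg_add, sub_eq_add_neg]
end
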